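/- arXiv:2306.13305 — 6 statements merged into one kernel-verified Lean document; each statement's English description precedes it below -/
import Mathlib

section
/- For a continuous function w on [0,T] and any M > 0, the set of absolutely continuous functions h on [0,T] with h(0) = r, h(t) ≥ w(t) for all t ∈ [0,T], and ∫₀ᵀ h'(t)² dt ≤ M², is compact in C[0,T] with the uniform topology. -/
open MeasureTheory Set

/-- Auxiliary: congruence of `indicatorConstLp` in the set. -/
lemma indConst_congr_set {μ : Measure ℝ} {s t : Set ℝ} (h : s = t)
    (hs : MeasurableSet s) (hμs : μ s ≠ ⊤) (ht : MeasurableSet t) (hμt : μ t ≠ ⊤) :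
    indicatorConstLp 2 hs hμs (1:ℝ) = indicatorConstLp 2 ht hμt (1:ℝ) := by
  subst h; rfl

/-- For a continuous function `w` on `[0,T]` and any `M > 0`, the set of
absolutely continuous functions `h` on `[0,T]` with `h 0 = r`, `h ≥ w` on `[0,T]` and
energy `∫₀ᵀ h'(t)² dt ≤ M²` is compact in `C[0,T]` with the uniform topology.
Absolute continuity is expressed by `h t = r + ∫₀ᵗ g` with `g` integrable. -/
theorem stmt_0 (T r M : ℝ) (hT : 0 < T) (hM : 0 < M)
    (w : ℝ → ℝ) (hw : ContinuousOn w (Icc 0 T)) :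
    IsCompact {f : C(Icc (0:ℝ) T, ℝ) |
      f ⟨0, Set.left_mem_Icc.mpr hT.le⟩ = r ∧
      (∀ t : Icc (0:ℝ) T, w t ≤ f t) ∧
      ∃ g : ℝ → ℝ, IntegrableOn g (Icc 0 T) ∧
        IntegrableOn (fun s => g s ^ 2) (Icc 0 T) ∧
        (∀ t : Icc (0:ℝ) T, f t = r + ∫ s in (0:ℝ)..(t : ℝ), g s) ∧
        (∫ s in (0:ℝ)..T, g s ^ 2) ≤ M ^ 2} := by
  set S : Set C(Icc (0:ℝ) T, ℝ) := {f : C(Icc (0:ℝ) T, ℝ) |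
      f ⟨0, Set.left_mem_Icc.mpr hT.le⟩ = r ∧
      (∀ t : Icc (0:ℝ) T, w t ≤ f t) ∧
      ∃ g : ℝ → ℝ, IntegrableOn g (Icc 0 T) ∧
        IntegrableOn (fun s => g s ^ 2) (Icc 0 T) ∧
        (∀ t : Icc (0:ℝ) T, f t = r + ∫ s in (0:ℝ)..(t : ℝ), g s) ∧
        (∫ s in (0:ℝ)..T, g s ^ 2) ≤ M ^ 2} with hSdef
  set μ : Measure ℝ := volume.restrict (Icc 0 T) with hμdef
  haveI : IsFiniteMeasure μ := ⟨by
    rw [hμdef, Measure.restrict_apply_univ, Real.volume_Icc]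
    exact ENNReal.ofReal_lt_top⟩
  have hfin : ∀ s : Set ℝ, μ s ≠ ⊤ := fun s => measure_ne_top μ s
  set H := Lp ℝ 2 μ with hHdef
  set χ : Icc (0:ℝ) T → H :=
    fun t => indicatorConstLp 2 (measurableSet_Icc : MeasurableSet (Icc 0 (t:ℝ))) (hfin _) (1:ℝ)
    with hχdef
  -- inner products with χ compute truncated integrals
  have hval : ∀ (u : ℝ → ℝ) (G : H), ⇑G =ᵐ[μ] u → ∀ t : Icc (0:ℝ) T,
      (inner ℝ G (χ t) : ℝ) = ∫ s in (0:ℝ)..(t:ℝ), u s := by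
    intro u G hae t
    rw [real_inner_comm, hχdef, L2.inner_indicatorConstLp_one]
    have h1 : μ.restrict (Icc 0 (t:ℝ)) = volume.restrict (Icc 0 (t:ℝ)) := by
      rw [hμdef, Measure.restrict_restrict measurableSet_Icc,
        inter_eq_left.mpr (Icc_subset_Icc le_rfl t.2.2)]
    have h2 : ⇑G =ᵐ[μ.restrict (Icc 0 (t:ℝ))] u :=
      hae.filter_mono (ae_mono Measure.restrict_le_self)
    calc ∫ x in Icc 0 (t:ℝ), G x ∂μ = ∫ x in Icc 0 (t:ℝ), u x ∂μ := integral_congr_ae h2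
      _ = ∫ x in Icc 0 (t:ℝ), u x := by
            rw [show (μ.restrict (Icc 0 (t:ℝ))) = volume.restrict (Icc 0 (t:ℝ)) from h1]
      _ = ∫ x in Ioc 0 (t:ℝ), u x := integral_Icc_eq_integral_Ioc
      _ = ∫ s in (0:ℝ)..(t:ℝ), u s := (intervalIntegral.integral_of_le t.2.1).symm
  -- the squared norm computes the energy
  have hnormsq : ∀ (u : ℝ → ℝ) (G : H), ⇑G =ᵐ[μ] u →
      ‖G‖ ^ 2 = ∫ s in (0:ℝ)..T, u s ^ 2 := by
    intro u G hae
    have h1 : ‖G‖ ^ 2 = ∫ a, u a ^ 2 ∂μ := by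
      rw [← real_inner_self_eq_norm_sq, L2.inner_def]
      refine integral_congr_ae ?_
      filter_upwards [hae] with a ha
      simp [RCLike.inner_apply, ha, sq]
    rw [h1]
    calc ∫ a, u a ^ 2 ∂μ = ∫ a in Icc (0:ℝ) T, u a ^ 2 := by rw [hμdef]
      _ = ∫ a in Ioc (0:ℝ) T, u a ^ 2 := integral_Icc_eq_integral_Ioc
      _ = ∫ s in (0:ℝ)..T, u s ^ 2 := (intervalIntegral.integral_of_le hT.le).symm
  -- norm bound for increments of χ
  have hχle : ∀ s t : Icc (0:ℝ) T, (s:ℝ) ≤ (t:ℝ) →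
      ‖χ t - χ s‖ ≤ Real.sqrt ((t:ℝ) - (s:ℝ)) := by
    intro s t hst
    have hunion : Icc (0:ℝ) (s:ℝ) ∪ Ioc (s:ℝ) (t:ℝ) = Icc 0 (t:ℝ) :=
      Icc_union_Ioc_eq_Icc s.2.1 hst
    have hdisj : Disjoint (Icc (0:ℝ) (s:ℝ)) (Ioc (s:ℝ) (t:ℝ)) :=
      Set.disjoint_left.mpr (fun x hx hx' => absurd hx.2 (not_le.mpr hx'.1))
    have hsplit : χ t = χ s + indicatorConstLp 2
        (measurableSet_Ioc : MeasurableSet (Ioc (s:ℝ) (t:ℝ))) (hfin _) (1:ℝ) := by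
      rw [hχdef]
      rw [← indicatorConstLp_disjoint_union measurableSet_Icc measurableSet_Ioc
        (hfin _) (hfin _) hdisj (1:ℝ)]
      exact indConst_congr_set hunion.symm _ _ _ _
    have hsub : χ t - χ s = indicatorConstLp 2
        (measurableSet_Ioc : MeasurableSet (Ioc (s:ℝ) (t:ℝ))) (hfin _) (1:ℝ) := by
      rw [hsplit]; abel
    rw [hsub, norm_indicatorConstLp (by norm_num) (by norm_num)]
    have hμle : (μ (Ioc (s:ℝ) (t:ℝ))).toReal ≤ (t:ℝ) - (s:ℝ) := by
      have h1 : μ (Ioc (s:ℝ) (t:ℝ)) ≤ ENNReal.ofReal ((t:ℝ) - (s:ℝ)) := by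
        rw [hμdef]
        calc volume.restrict (Icc 0 T) (Ioc (s:ℝ) (t:ℝ)) ≤ volume (Ioc (s:ℝ) (t:ℝ)) :=
              Measure.restrict_apply_le _ _
          _ = ENNReal.ofReal ((t:ℝ) - (s:ℝ)) := Real.volume_Ioc
      calc (μ (Ioc (s:ℝ) (t:ℝ))).toReal ≤ (ENNReal.ofReal ((t:ℝ) - (s:ℝ))).toReal :=
            ENNReal.toReal_mono ENNReal.ofReal_ne_top h1
        _ = (t:ℝ) - (s:ℝ) := ENNReal.toReal_ofReal (by linarith)
    rw [norm_one, one_mul, Real.sqrt_eq_rpow]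
    have h2 : (1 / (ENNReal.toReal 2)) = (1/2 : ℝ) := by norm_num
    rw [h2]
    exact Real.rpow_le_rpow ENNReal.toReal_nonneg hμle (by norm_num)
  have hχnorm : ∀ s t : Icc (0:ℝ) T, ‖χ t - χ s‖ ≤ Real.sqrt (dist (t:ℝ) (s:ℝ)) := by
    intro s t
    rcases le_total (s:ℝ) (t:ℝ) with h | h
    · have := hχle s t h
      rwa [Real.dist_eq, abs_of_nonneg (by linarith)]
    · have := hχle t s h
      rwa [norm_sub_rev, Real.dist_eq, abs_of_nonpos (by linarith), neg_sub]
  have hχcont : Continuous χ := by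
    rw [Metric.continuous_iff]
    intro b ε hε
    refine ⟨ε ^ 2, by positivity, fun a hab => ?_⟩
    calc dist (χ a) (χ b) = ‖χ a - χ b‖ := dist_eq_norm _ _
      _ ≤ Real.sqrt (dist (a:ℝ) (b:ℝ)) := hχnorm b a
      _ < Real.sqrt (ε ^ 2) := Real.sqrt_lt_sqrt dist_nonneg (by rwa [← Subtype.dist_eq])
      _ = ε := by rw [Real.sqrt_sq hε.le]
  have hχ0 : ∀ (h0 : (0:ℝ) ∈ Icc (0:ℝ) T), χ ⟨0, h0⟩ = 0 := by
    intro h0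
    have hn : ‖χ ⟨0, h0⟩‖ = 0 := by
      rw [hχdef, norm_indicatorConstLp (by norm_num) (by norm_num)]
      have hz : μ (Icc (0:ℝ) ((⟨0, h0⟩ : Icc (0:ℝ) T) : ℝ)) = 0 := by
        show μ (Icc (0:ℝ) (0:ℝ)) = 0
        rw [Icc_self]
        exact le_antisymm (le_trans (Measure.restrict_apply_le _ _)
          (le_of_eq Real.volume_singleton)) zero_le
      rw [measureReal_def, hz]
      simp [Real.zero_rpow]
    exact norm_eq_zero.mp hn
  -- Direction 1: every element of S is represented by a functional of norm ≤ M
  have hrep1 : ∀ f : C(Icc (0:ℝ) T, ℝ), f ∈ S → ∃ φ : WeakDual ℝ H,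
      ‖WeakDual.toStrongDual φ‖ ≤ M ∧ ∀ t : Icc (0:ℝ) T, f t = r + φ (χ t) := by
    rintro f ⟨hf0, hfw, g, hg1, hg2, hfg, hgM⟩
    have hgint : Integrable g μ := by rw [hμdef]; exact hg1
    have hg2' : Integrable (fun s => g s ^ 2) μ := by rw [hμdef]; exact hg2
    have hmem : MemLp g 2 μ :=
      (memLp_two_iff_integrable_sq hgint.aestronglyMeasurable).mpr hg2'
    set G : H := hmem.toLp g with hGdef
    have hae : ⇑G =ᵐ[μ] g := hmem.coeFn_toLp
    have hGnorm : ‖G‖ ≤ M := by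
      have h1 : ‖G‖ ^ 2 ≤ M ^ 2 := by rw [hnormsq g G hae]; exact hgM
      nlinarith [norm_nonneg G]
    refine ⟨StrongDual.toWeakDual (InnerProductSpace.toDual ℝ H G), ?_, ?_⟩
    · show ‖InnerProductSpace.toDual ℝ H G‖ ≤ M
      rw [LinearIsometryEquiv.norm_map]
      exact hGnorm
    · intro t
      have h1 : (StrongDual.toWeakDual (InnerProductSpace.toDual ℝ H G)) (χ t)
          = (inner ℝ G (χ t) : ℝ) := InnerProductSpace.toDual_apply_apply
      rw [h1, hval g G hae t]
      exact hfg t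
  -- Direction 2: every functional of norm ≤ M gives an admissible `g`
  have hrep2 : ∀ φ : WeakDual ℝ H, ‖WeakDual.toStrongDual φ‖ ≤ M →
      ∃ g : ℝ → ℝ, IntegrableOn g (Icc 0 T) ∧
        IntegrableOn (fun s => g s ^ 2) (Icc 0 T) ∧
        (∀ t : Icc (0:ℝ) T, φ (χ t) = ∫ s in (0:ℝ)..(t:ℝ), g s) ∧
        (∫ s in (0:ℝ)..T, g s ^ 2) ≤ M ^ 2 := by
    intro φ hφ
    set G : H := (InnerProductSpace.toDual ℝ H).symm (WeakDual.toStrongDual φ) with hGdef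
    have happ : ∀ u : H, φ u = (inner ℝ G u : ℝ) := fun u =>
      (InnerProductSpace.toDual_symm_apply).symm
    have hGnorm : ‖G‖ ≤ M := by rw [hGdef, LinearIsometryEquiv.norm_map]; exact hφ
    have hmem : MemLp (⇑G) 2 μ := Lp.memLp G
    refine ⟨⇑G, ?_, ?_, ?_, ?_⟩
    · show Integrable (⇑G) (volume.restrict (Icc 0 T))
      rw [← hμdef]
      exact hmem.integrable one_le_two
    · show Integrable (fun s => (⇑G) s ^ 2) (volume.restrict (Icc 0 T))
      rw [← hμdef]
      exact hmem.integrable_sq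
    · intro t
      rw [happ (χ t), hval (⇑G) G Filter.EventuallyEq.rfl t]
    · rw [← hnormsq (⇑G) G Filter.EventuallyEq.rfl]
      exact pow_le_pow_left₀ (norm_nonneg _) hGnorm 2
  -- the compact set of functionals
  set B : Set (WeakDual ℝ H) :=
    (WeakDual.toStrongDual ⁻¹' Metric.closedBall (0 : StrongDual ℝ H) M) ∩
      ⋂ t : Icc (0:ℝ) T, {φ : WeakDual ℝ H | w t ≤ r + φ (χ t)} with hBdef
  have hBcomp : IsCompact B :=
    (WeakDual.isCompact_closedBall (𝕜 := ℝ) (0 : StrongDual ℝ H) M).inter_right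
      (isClosed_iInter fun t => isClosed_le continuous_const
        (continuous_const.add (WeakDual.eval_continuous (χ t))))
  -- the image identity
  have himg : ContinuousMap.toFun '' S
      = (fun (φ : WeakDual ℝ H) (t : Icc (0:ℝ) T) => r + φ (χ t)) '' B := by
    ext F
    constructor
    · rintro ⟨f, hf, rfl⟩
      obtain ⟨φ, hφM, hφrep⟩ := hrep1 f hf
      refine ⟨φ, ⟨mem_closedBall_zero_iff.mpr hφM, mem_iInter.mpr fun t => ?_⟩, ?_⟩
      · show w t ≤ r + φ (χ t)
        rw [← hφrep t]
        exact hf.2.1 t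
      · funext t
        exact (hφrep t).symm
    · rintro ⟨φ, ⟨hφ1, hφ2⟩, rfl⟩
      have hφM : ‖WeakDual.toStrongDual φ‖ ≤ M := mem_closedBall_zero_iff.mp hφ1
      obtain ⟨g, hg1, hg2, hgval, hgM⟩ := hrep2 φ hφM
      have hcont : Continuous fun t : Icc (0:ℝ) T => r + φ (χ t) :=
        continuous_const.add ((WeakDual.toStrongDual φ).continuous.comp hχcont)
      refine ⟨⟨fun t => r + φ (χ t), hcont⟩, ⟨?_, ?_, g, hg1, hg2, ?_, hgM⟩, rfl⟩
      · show r + φ (χ ⟨0, Set.left_mem_Icc.mpr hT.le⟩) = r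
        rw [hχ0, map_zero, add_zero]
      · intro t
        exact mem_iInter.mp hφ2 t
      · intro t
        show r + φ (χ t) = _
        rw [hgval t]
  -- conclude by Arzelà–Ascoli
  refine ArzelaAscoli.isCompact_of_equicontinuous S ?_ ?_
  · rw [himg]
    exact hBcomp.image (continuous_pi fun t =>
      continuous_const.add (WeakDual.eval_continuous (χ t)))
  · apply Metric.equicontinuous_of_continuity_modulus (fun d => M * Real.sqrt d)
    · have h0 : Filter.Tendsto (fun d => M * Real.sqrt d) (nhds 0) (nhds (M * Real.sqrt 0)) :=
        (continuous_const.mul Real.continuous_sqrt).tendsto 0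
      simpa using h0
    · rintro x y ⟨f, hf⟩
      obtain ⟨φ, hφM, hφrep⟩ := hrep1 f hf
      show dist (f x) (f y) ≤ M * Real.sqrt (dist x y)
      rw [hφrep x, hφrep y, Real.dist_eq, add_sub_add_left_eq_sub, ← map_sub]
      calc |φ (χ x - χ y)| ≤ ‖WeakDual.toStrongDual φ‖ * ‖χ x - χ y‖ :=
            (WeakDual.toStrongDual φ).le_opNorm _
        _ ≤ M * Real.sqrt (dist (x:ℝ) (y:ℝ)) :=
            mul_le_mul hφM (hχnorm y x) (norm_nonneg _) hM.le
        _ = M * Real.sqrt (dist x y) := by rw [Subtype.dist_eq]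
end

section
/- Let g be the non-increasing rearrangement of the function max{χ'(·), 0} on [0,T], where χ ∈ AC[0,T]. Then the function χ₁(t) := χ(0) + ∫₀ᵗ g(s) ds is concave, non-decreasing, satisfies χ₁(t) ≥ χ(t) for all t ∈ [0,T], and ∫₀ᵀ g(s)² ds = ∫₀ᵀ max{χ'(s),0}² ds ≤ ∫₀ᵀ χ'(s)² ds. -/
open MeasureTheory Set

private lemma level_min (T t c : ℝ) (htT : t ≤ T) {g : ℝ → ℝ}
    (hmono : AntitoneOn g (Icc 0 T)) :
    volume {s ∈ Icc (0:ℝ) t | c < g s}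
      = min (ENNReal.ofReal t) (volume {s ∈ Icc (0:ℝ) T | c < g s}) := by
  by_cases H : ∃ s, s ∈ Icc (0:ℝ) T ∧ c < g s ∧ t < s
  · obtain ⟨s, hs, hgs, hts⟩ := H
    have key : ∀ u, u ∈ Icc (0:ℝ) t → c < g u := by
      intro u hu
      exact lt_of_lt_of_le hgs (hmono ⟨hu.1, hu.2.trans htT⟩ hs (hu.2.trans hts.le))
    have h1 : {x ∈ Icc (0:ℝ) t | c < g x} = Icc 0 t := by
      ext u; exact ⟨fun hu => hu.1, fun hu => ⟨hu, key u hu⟩⟩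
    have h2 : Icc (0:ℝ) t ⊆ {x ∈ Icc (0:ℝ) T | c < g x} := fun u hu =>
      ⟨⟨hu.1, hu.2.trans htT⟩, key u hu⟩
    rw [h1, Real.volume_Icc, sub_zero]
    refine (min_eq_left ?_).symm
    calc ENNReal.ofReal t = volume (Icc (0:ℝ) t) := by rw [Real.volume_Icc, sub_zero]
      _ ≤ _ := measure_mono h2
  · push_neg at H
    have h1 : {x ∈ Icc (0:ℝ) t | c < g x} = {x ∈ Icc (0:ℝ) T | c < g x} := by
      ext u
      constructor
      · rintro ⟨hu, hc⟩; exact ⟨⟨hu.1, hu.2.trans htT⟩, hc⟩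
      · rintro ⟨hu, hc⟩; exact ⟨⟨hu.1, H u hu hc⟩, hc⟩
    rw [h1]
    refine (min_eq_right ?_).symm
    calc volume {x ∈ Icc (0:ℝ) T | c < g x} = volume {x ∈ Icc (0:ℝ) t | c < g x} := by
          rw [h1]
      _ ≤ volume (Icc (0:ℝ) t) := measure_mono fun u hu => hu.1
      _ = ENNReal.ofReal t := by rw [Real.volume_Icc, sub_zero]

private lemma g_nonneg_ae (T : ℝ) {g f : ℝ → ℝ} (hf : ∀ s, 0 ≤ f s)
    (hmono : AntitoneOn g (Icc 0 T))
    (hequi : ∀ c : ℝ,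
      volume {s ∈ Icc (0:ℝ) T | c < g s} = volume {s ∈ Icc (0:ℝ) T | c < f s}) :
    ∀ᵐ s ∂(volume.restrict (Icc (0:ℝ) T)), 0 ≤ g s := by
  have hN : volume {s ∈ Icc (0:ℝ) T | g s < 0} = 0 := by
    have hsub : {s ∈ Icc (0:ℝ) T | g s < 0}
        ⊆ ⋃ n : ℕ, (Icc (0:ℝ) T \ {s ∈ Icc (0:ℝ) T | -(1/((n:ℝ)+1)) < g s}) := by
      rintro s ⟨hs, hgs⟩
      obtain ⟨n, hn⟩ := exists_nat_one_div_lt (by linarith : (0:ℝ) < -g s)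
      refine mem_iUnion.2 ⟨n, hs, ?_⟩
      rintro ⟨-, hc⟩
      linarith
    refine measure_mono_null hsub (measure_iUnion_null fun n => ?_)
    set c : ℝ := -(1/((n:ℝ)+1)) with hc
    have hcneg : c < 0 := by
      rw [hc]
      have : (0:ℝ) < 1/((n:ℝ)+1) := by positivity
      linarith
    have hmeas : MeasurableSet {s ∈ Icc (0:ℝ) T | c < g s} := by
      apply Set.OrdConnected.measurableSet
      constructor
      rintro x ⟨hx, _⟩ y ⟨hy, hgy⟩ z hz
      have hzI : z ∈ Icc (0:ℝ) T := ⟨hx.1.trans hz.1, hz.2.trans hy.2⟩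
      exact ⟨hzI, lt_of_lt_of_le hgy (hmono hzI hy hz.2)⟩
    have hfull : volume {s ∈ Icc (0:ℝ) T | c < g s} = ENNReal.ofReal (T - 0) := by
      rw [hequi]
      have : {s ∈ Icc (0:ℝ) T | c < f s} = Icc 0 T := by
        ext u
        exact ⟨fun hu => hu.1, fun hu => ⟨hu, lt_of_lt_of_le hcneg (hf u)⟩⟩
      rw [this, Real.volume_Icc]
    have hd := measure_diff (fun u hu => hu.1) hmeas.nullMeasurableSet
      (by rw [hfull]; exact ENNReal.ofReal_ne_top)
    rw [hd, hfull, Real.volume_Icc, tsub_self]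
  have h1 : ∀ᵐ s ∂volume, s ∉ {s ∈ Icc (0:ℝ) T | g s < 0} :=
    (measure_eq_zero_iff_ae_notMem (μ := volume)).1 hN
  filter_upwards [ae_restrict_of_ae h1, ae_restrict_mem measurableSet_Icc] with s h1 h2
  by_contra h
  exact h1 ⟨h2, lt_of_not_ge h⟩

/-- if `g` is the non-increasing rearrangement on `[0,T]` of
`max (χ'(·)) 0` (expressed by antitonicity and equimeasurability), where `χ` is
absolutely continuous on `[0,T]` with square-integrable a.e. derivative `g'`, then
`χ₁(t) := χ(0) + ∫₀ᵗ g` is concave, non-decreasing, majorizes `χ` on `[0,T]`, and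
`∫₀ᵀ g² = ∫₀ᵀ max(χ',0)² ≤ ∫₀ᵀ χ'²`. -/
theorem stmt_5 (T : ℝ) (hT : 0 < T) (χ g' g : ℝ → ℝ)
    (hg'int : IntegrableOn g' (Icc 0 T))
    (hg'sq : IntegrableOn (fun s => g' s ^ 2) (Icc 0 T))
    (hχ : ∀ t ∈ Icc (0:ℝ) T, χ t = χ 0 + ∫ s in (0:ℝ)..t, g' s)
    (hmono : AntitoneOn g (Icc 0 T))
    (hequi : ∀ c : ℝ,
      volume {s ∈ Icc (0:ℝ) T | c < g s} = volume {s ∈ Icc (0:ℝ) T | c < max (g' s) 0}) :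
    ConcaveOn ℝ (Icc 0 T) (fun t => χ 0 + ∫ s in (0:ℝ)..t, g s) ∧
    MonotoneOn (fun t => χ 0 + ∫ s in (0:ℝ)..t, g s) (Icc 0 T) ∧
    (∀ t ∈ Icc (0:ℝ) T, χ t ≤ χ 0 + ∫ s in (0:ℝ)..t, g s) ∧
    (∫ s in (0:ℝ)..T, g s ^ 2) = (∫ s in (0:ℝ)..T, max (g' s) 0 ^ 2) ∧
    (∫ s in (0:ℝ)..T, max (g' s) 0 ^ 2) ≤ ∫ s in (0:ℝ)..T, g' s ^ 2 := by
  have hT0 : (0:ℝ) ≤ T := hT.le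
  set f : ℝ → ℝ := fun s => max (g' s) 0 with hfdef
  have hf0 : ∀ s, 0 ≤ f s := fun s => le_max_right _ _
  have hgint : IntegrableOn g (Icc 0 T) := AntitoneOn.integrableOn_isCompact isCompact_Icc hmono
  have hfint : IntegrableOn f (Icc 0 T) := hg'int.pos_part
  have hgmeasT : AEMeasurable g (volume.restrict (Icc (0:ℝ) T)) :=
    aemeasurable_restrict_of_antitoneOn measurableSet_Icc hmono
  have hfmeasT : AEMeasurable f (volume.restrict (Icc (0:ℝ) T)) :=
    hfint.aemeasurable
  have hequi' : ∀ c : ℝ,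
      volume {s ∈ Icc (0:ℝ) T | c < g s} = volume {s ∈ Icc (0:ℝ) T | c < f s} := hequi
  have hgnn : ∀ᵐ s ∂(volume.restrict (Icc (0:ℝ) T)), 0 ≤ g s :=
    g_nonneg_ae T hf0 hmono hequi'
  have hIsub : ∀ t : ℝ, t ∈ Icc (0:ℝ) T → Icc (0:ℝ) t ⊆ Icc (0:ℝ) T := fun t ht =>
    Icc_subset_Icc le_rfl ht.2
  have hIg : ∀ a b : ℝ, a ∈ Icc (0:ℝ) T → b ∈ Icc (0:ℝ) T → IntervalIntegrable g volume a b :=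
    fun a b ha hb => (hgint.mono_set (uIcc_subset_Icc ha hb)).intervalIntegrable
  have hIf : ∀ a b : ℝ, a ∈ Icc (0:ℝ) T → b ∈ Icc (0:ℝ) T → IntervalIntegrable f volume a b :=
    fun a b ha hb => (hfint.mono_set (uIcc_subset_Icc ha hb)).intervalIntegrable
  have hIg' : ∀ a b : ℝ, a ∈ Icc (0:ℝ) T → b ∈ Icc (0:ℝ) T → IntervalIntegrable g' volume a b :=
    fun a b ha hb => (hg'int.mono_set (uIcc_subset_Icc ha hb)).intervalIntegrable
  have h0mem : (0:ℝ) ∈ Icc (0:ℝ) T := ⟨le_rfl, hT0⟩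
  have hTmem : T ∈ Icc (0:ℝ) T := ⟨hT0, le_rfl⟩
  -- restrict applied to superlevel sets
  have hres : ∀ (φ : ℝ → ℝ) (u c : ℝ), AEMeasurable φ (volume.restrict (Icc (0:ℝ) u)) →
      volume.restrict (Icc (0:ℝ) u) {a | c < φ a} = volume {s ∈ Icc (0:ℝ) u | c < φ s} := by
    intro φ u c hφ
    have hpre : {a | c < φ a} = φ ⁻¹' Ioi c := rfl
    rw [hpre, Measure.restrict_apply₀ (hφ.nullMeasurable measurableSet_Ioi)]
    congr 1
    ext x
    exact ⟨fun h => ⟨h.2, h.1⟩, fun h => ⟨h.2, h.1⟩⟩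
  -- Hardy–Littlewood type inequality at the lintegral level
  have keyHL : ∀ t : ℝ, t ∈ Icc (0:ℝ) T →
      (∫⁻ s in Icc (0:ℝ) t, ENNReal.ofReal (f s)) ≤
        ∫⁻ s in Icc (0:ℝ) t, ENNReal.ofReal (g s) := by
    intro t ht
    have hgm : AEMeasurable g (volume.restrict (Icc (0:ℝ) t)) :=
      hgmeasT.mono_measure (Measure.restrict_mono (hIsub t ht) le_rfl)
    have hfm : AEMeasurable f (volume.restrict (Icc (0:ℝ) t)) :=
      hfmeasT.mono_measure (Measure.restrict_mono (hIsub t ht) le_rfl)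
    have hgnn' : ∀ᵐ s ∂(volume.restrict (Icc (0:ℝ) t)), 0 ≤ g s :=
      ae_restrict_of_ae_restrict_of_subset (hIsub t ht) hgnn
    rw [lintegral_eq_lintegral_meas_lt _ (ae_of_all _ hf0) hfm,
        lintegral_eq_lintegral_meas_lt _ hgnn' hgm]
    refine lintegral_mono fun c => ?_
    rw [hres f t c hfm, hres g t c hgm]
    calc volume {s ∈ Icc (0:ℝ) t | c < f s}
        ≤ min (ENNReal.ofReal t) (volume {s ∈ Icc (0:ℝ) T | c < f s}) := by
          refine le_min ?_ (measure_mono fun u hu => ⟨hIsub t ht hu.1, hu.2⟩)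
          calc volume {s ∈ Icc (0:ℝ) t | c < f s} ≤ volume (Icc (0:ℝ) t) :=
                measure_mono fun u hu => hu.1
            _ = ENNReal.ofReal t := by rw [Real.volume_Icc, sub_zero]
      _ = min (ENNReal.ofReal t) (volume {s ∈ Icc (0:ℝ) T | c < g s}) := by rw [hequi' c]
      _ = volume {s ∈ Icc (0:ℝ) t | c < g s} := (level_min T t c ht.2 hmono).symm
  -- monotonicity
  have hmonoF : MonotoneOn (fun t => χ 0 + ∫ s in (0:ℝ)..t, g s) (Icc 0 T) := by
    intro a ha b hb hab
    have h1 : (∫ s in (0:ℝ)..b, g s) - (∫ s in (0:ℝ)..a, g s) = ∫ s in a..b, g s :=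
      intervalIntegral.integral_interval_sub_left (hIg 0 b h0mem hb) (hIg 0 a h0mem ha)
    have h2 : 0 ≤ ∫ s in a..b, g s :=
      intervalIntegral.integral_nonneg_of_ae_restrict hab
        (ae_restrict_of_ae_restrict_of_subset (Icc_subset_Icc ha.1 hb.2) hgnn)
    simp only
    linarith
  -- concavity
  have hconc : ConcaveOn ℝ (Icc 0 T) (fun t => χ 0 + ∫ s in (0:ℝ)..t, g s) := by
    apply concaveOn_of_slope_anti_adjacent (convex_Icc 0 T)
    intro x y z hx hz hxy hyz
    have hy : y ∈ Icc (0:ℝ) T := ⟨hx.1.trans hxy.le, hyz.le.trans hz.2⟩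
    have hzy : (0:ℝ) < z - y := sub_pos.2 hyz
    have hyx : (0:ℝ) < y - x := sub_pos.2 hxy
    have e1 : (χ 0 + ∫ s in (0:ℝ)..z, g s) - (χ 0 + ∫ s in (0:ℝ)..y, g s)
        = ∫ s in y..z, g s := by
      rw [add_sub_add_left_eq_sub]
      exact intervalIntegral.integral_interval_sub_left (hIg 0 z h0mem hz) (hIg 0 y h0mem hy)
    have e2 : (χ 0 + ∫ s in (0:ℝ)..y, g s) - (χ 0 + ∫ s in (0:ℝ)..x, g s)
        = ∫ s in x..y, g s := by
      rw [add_sub_add_left_eq_sub]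
      exact intervalIntegral.integral_interval_sub_left (hIg 0 y h0mem hy) (hIg 0 x h0mem hx)
    have b1 : (∫ s in y..z, g s) ≤ (z - y) * g y := by
      have hb := intervalIntegral.integral_mono_on hyz.le (hIg y z hy hz)
        (intervalIntegrable_const (c := g y))
        (fun u hu => hmono hy ⟨hy.1.trans hu.1, hu.2.trans hz.2⟩ hu.1)
      simpa using hb
    have b2 : (y - x) * g y ≤ ∫ s in x..y, g s := by
      have hb := intervalIntegral.integral_mono_on hxy.le
        (intervalIntegrable_const (c := g y)) (hIg x y hx hy)
        (fun u hu => hmono ⟨hx.1.trans hu.1, hu.2.trans hy.2⟩ hy hu.2)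
      simpa using hb
    show ((χ 0 + ∫ s in (0:ℝ)..z, g s) - (χ 0 + ∫ s in (0:ℝ)..y, g s)) / (z - y)
        ≤ ((χ 0 + ∫ s in (0:ℝ)..y, g s) - (χ 0 + ∫ s in (0:ℝ)..x, g s)) / (y - x)
    rw [e1, e2]
    calc (∫ s in y..z, g s) / (z - y) ≤ g y := by
          rw [div_le_iff₀ hzy]
          exact b1.trans_eq (mul_comm _ _)
      _ ≤ (∫ s in x..y, g s) / (y - x) := by
          rw [le_div_iff₀ hyx]
          exact (mul_comm _ _).trans_le b2
  -- majorization
  have hmaj : ∀ t ∈ Icc (0:ℝ) T, χ t ≤ χ 0 + ∫ s in (0:ℝ)..t, g s := by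
    intro t ht
    rw [hχ t ht]
    have htm : t ∈ Icc (0:ℝ) T := ht
    have h1 : (∫ s in (0:ℝ)..t, g' s) ≤ ∫ s in (0:ℝ)..t, f s :=
      intervalIntegral.integral_mono_on ht.1 (hIg' 0 t h0mem htm) (hIf 0 t h0mem htm)
        (fun u _ => le_max_left _ _)
    have hgm : AEMeasurable g (volume.restrict (Icc (0:ℝ) t)) :=
      hgmeasT.mono_measure (Measure.restrict_mono (hIsub t htm) le_rfl)
    have hfm : AEMeasurable f (volume.restrict (Icc (0:ℝ) t)) :=
      hfmeasT.mono_measure (Measure.restrict_mono (hIsub t htm) le_rfl)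
    have hgnn' : ∀ᵐ s ∂(volume.restrict (Icc (0:ℝ) t)), 0 ≤ g s :=
      ae_restrict_of_ae_restrict_of_subset (hIsub t htm) hgnn
    have h2 : (∫ s in (0:ℝ)..t, f s) ≤ ∫ s in (0:ℝ)..t, g s := by
      rw [intervalIntegral.integral_of_le ht.1, intervalIntegral.integral_of_le ht.1,
          ← integral_Icc_eq_integral_Ioc, ← integral_Icc_eq_integral_Ioc,
          integral_eq_lintegral_of_nonneg_ae (ae_of_all _ hf0) hfm.aestronglyMeasurable,
          integral_eq_lintegral_of_nonneg_ae hgnn' hgm.aestronglyMeasurable]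
      refine ENNReal.toReal_mono ?_ (keyHL t htm)
      exact (hgint.mono_set (hIsub t htm)).lintegral_lt_top.ne
    linarith
  -- equality of integrals of squares
  have hkey2 : (∫ s in (0:ℝ)..T, g s ^ 2) = ∫ s in (0:ℝ)..T, f s ^ 2 := by
    have hgm2 : AEMeasurable (fun s => g s ^ 2) (volume.restrict (Icc (0:ℝ) T)) :=
      hgmeasT.pow_const 2
    have hfm2 : AEMeasurable (fun s => f s ^ 2) (volume.restrict (Icc (0:ℝ) T)) :=
      hfmeasT.pow_const 2
    rw [intervalIntegral.integral_of_le hT0, intervalIntegral.integral_of_le hT0,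
        ← integral_Icc_eq_integral_Ioc, ← integral_Icc_eq_integral_Ioc,
        integral_eq_lintegral_of_nonneg_ae (ae_of_all _ fun s => sq_nonneg (g s))
          hgm2.aestronglyMeasurable,
        integral_eq_lintegral_of_nonneg_ae (ae_of_all _ fun s => sq_nonneg (f s))
          hfm2.aestronglyMeasurable]
    congr 1
    rw [lintegral_eq_lintegral_meas_lt _ (ae_of_all _ fun s => sq_nonneg (g s)) hgm2,
        lintegral_eq_lintegral_meas_lt _ (ae_of_all _ fun s => sq_nonneg (f s)) hfm2]
    refine lintegral_congr_ae ((ae_restrict_iff' measurableSet_Ioi).2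
      (ae_of_all _ fun c hc => ?_))
    have hc : (0:ℝ) < c := hc
    have hsq : ∀ a : ℝ, 0 ≤ a → (c < a ^ 2 ↔ Real.sqrt c < a) := by
      intro a ha
      rcases eq_or_lt_of_le ha with h | h
      · constructor
        · intro hlt; nlinarith
        · intro hlt; exact absurd hlt (by rw [← h]; exact not_lt.2 (Real.sqrt_nonneg c))
      · exact (Real.sqrt_lt' h).symm
    have e1 : {a : ℝ | c < g a ^ 2} =ᵐ[volume.restrict (Icc (0:ℝ) T)]
        {a : ℝ | Real.sqrt c < g a} := by
      rw [Filter.eventuallyEq_set]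
      filter_upwards [hgnn] with a ha
      exact hsq (g a) ha
    have e2 : {a : ℝ | c < f a ^ 2} = {a : ℝ | Real.sqrt c < f a} := by
      ext a; exact hsq (f a) (hf0 a)
    show (volume.restrict (Icc (0:ℝ) T)) {a | c < g a ^ 2}
        = (volume.restrict (Icc (0:ℝ) T)) {a | c < f a ^ 2}
    rw [measure_congr e1, e2, hres g T (Real.sqrt c) hgmeasT, hres f T (Real.sqrt c) hfmeasT]
    exact hequi' (Real.sqrt c)
  -- max(g',0)^2 ≤ g'^2
  have hptw : ∀ s : ℝ, f s ^ 2 ≤ g' s ^ 2 := by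
    intro s
    have h1 : |f s| ≤ |g' s| := by
      simp only [hfdef]
      rcases le_total (g' s) 0 with h | h
      · rw [max_eq_right h]
        simpa using abs_nonneg (g' s)
      · rw [max_eq_left h]
    calc f s ^ 2 = |f s| ^ 2 := (sq_abs _).symm
      _ ≤ |g' s| ^ 2 := pow_le_pow_left₀ (abs_nonneg _) h1 2
      _ = g' s ^ 2 := sq_abs _
  have hfsq : IntegrableOn (fun s => f s ^ 2) (Icc 0 T) := by
    refine Integrable.mono hg'sq ((hfmeasT.pow_const 2).aestronglyMeasurable) (ae_of_all _ fun s => ?_)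
    rw [Real.norm_eq_abs, Real.norm_eq_abs, abs_of_nonneg (sq_nonneg _),
      abs_of_nonneg (sq_nonneg _)]
    exact hptw s
  have hineq : (∫ s in (0:ℝ)..T, f s ^ 2) ≤ ∫ s in (0:ℝ)..T, g' s ^ 2 := by
    refine intervalIntegral.integral_mono_on hT0
      (hfsq.mono_set (uIcc_subset_Icc h0mem hTmem)).intervalIntegrable
      (hg'sq.mono_set (uIcc_subset_Icc h0mem hTmem)).intervalIntegrable
      (fun u _ => hptw u)
  exact ⟨hconc, hmonoF, hmaj, hkey2, hineq⟩
end

section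
/- Let w : [0,T] → ℝ be continuous and r < max w. Any minimizer χ of the energy ∫₀ᵀ h'(t)² dt among absolutely continuous h with h(0) = r and h ≥ w on [0,T] is concave and non-decreasing. -/
open MeasureTheory Set

/-- `Adm T r w h g`: `h` is absolutely continuous on `[0,T]` with square-integrable
a.e. derivative `g`, `h 0 = r`, and `h ≥ w` on `[0,T]`. -/
def Adm (T r : ℝ) (w h g : ℝ → ℝ) : Prop :=
  IntegrableOn g (Icc 0 T) ∧ IntegrableOn (fun s => g s ^ 2) (Icc 0 T) ∧
  (∀ t ∈ Icc (0:ℝ) T, h t = r + ∫ s in (0:ℝ)..t, g s) ∧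
  (∀ t ∈ Icc (0:ℝ) T, w t ≤ h t)

/-- An affine function nonnegative at the endpoints of an interval is nonnegative
on the interval. -/
lemma affine_nonneg_aux {u v a b t : ℝ} (h1 : a ≤ t) (h2 : t ≤ b)
    (ha : 0 ≤ u + v * a) (hb : 0 ≤ u + v * b) : 0 ≤ u + v * t := by
  rcases eq_or_lt_of_le (h1.trans h2) with h | h
  · have ht : t = a := le_antisymm (h ▸ h2) h1
    rwa [ht]
  · have H : 0 ≤ (b - t) * (u + v * a) + (t - a) * (u + v * b) :=
      add_nonneg (mul_nonneg (by linarith) ha) (mul_nonneg (by linarith) hb)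
    nlinarith [H]

set_option maxHeartbeats 1200000 in
/-- if `w` is continuous with `w 0 < r < max_{[0,T]} w`, then any
minimizer `χ` of the energy over admissible functions is concave and non-decreasing
on `[0,T]`. -/
theorem stmt_7 (T r : ℝ) (hT : 0 < T) (w : ℝ → ℝ)
    (hw : ContinuousOn w (Icc 0 T)) (hw0 : w 0 < r)
    (hrmax : ∃ t ∈ Icc (0:ℝ) T, r < w t)
    (χ g : ℝ → ℝ) (hadm : Adm T r w χ g)
    (hmin : ∀ h g', Adm T r w h g' →
      (∫ s in (0:ℝ)..T, g s ^ 2) ≤ ∫ s in (0:ℝ)..T, g' s ^ 2) :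
    ConcaveOn ℝ (Icc 0 T) χ ∧ MonotoneOn χ (Icc 0 T) := by
  obtain ⟨hg1, hg2, hχ, hχw⟩ := hadm
  have hT0 : (0:ℝ) ≤ T := hT.le
  -- interval integrability on subintervals of `[0,T]`
  have hII : ∀ (f : ℝ → ℝ), IntegrableOn f (Icc 0 T) → ∀ a b : ℝ,
      a ∈ Icc (0:ℝ) T → b ∈ Icc (0:ℝ) T → IntervalIntegrable f volume a b := by
    intro f hf a b ha hb
    refine (hf.mono ?_ le_rfl).intervalIntegrable
    rw [show Icc (0:ℝ) T = uIcc 0 T from (uIcc_of_le hT0).symm]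
    exact uIcc_subset_uIcc (by rwa [uIcc_of_le hT0]) (by rwa [uIcc_of_le hT0])
  have hgi := hII g hg1
  have hg2i := hII _ hg2
  -- the key uniqueness lemma: any admissible competitor with no larger energy
  -- coincides with χ on [0,T]
  have key : ∀ h' g' : ℝ → ℝ, Adm T r w h' g' →
      (∫ s in (0:ℝ)..T, g' s ^ 2) ≤ (∫ s in (0:ℝ)..T, g s ^ 2) →
      ∀ t ∈ Icc (0:ℝ) T, h' t = χ t := by
    rintro h' g' ⟨hg'1, hg'2, hh', hh'w⟩ hle
    have hg'i := hII g' hg'1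
    have hg'2i := hII _ hg'2
    set gm : ℝ → ℝ := fun s => (g s + g' s) / 2 with hgm_def
    have hgm1 : IntegrableOn gm (Icc 0 T) := (hg1.add hg'1).div_const 2
    have hbnd : IntegrableOn (fun s => (g s ^ 2 + g' s ^ 2) / 2) (Icc 0 T) :=
      (hg2.add hg'2).div_const 2
    have hgm2 : IntegrableOn (fun s => gm s ^ 2) (Icc 0 T) := by
      refine Integrable.mono' hbnd ?_ ?_
      · exact hgm1.aestronglyMeasurable.pow 2
      · refine Filter.Eventually.of_forall fun s => ?_
        rw [Real.norm_eq_abs, abs_of_nonneg (sq_nonneg _)]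
        simp only [hgm_def]
        nlinarith [sq_nonneg (g s - g' s)]
    have hgmAdm : Adm T r w (fun t => r + ∫ s in (0:ℝ)..t, gm s) gm := by
      refine ⟨hgm1, hgm2, fun t ht => rfl, fun t ht => ?_⟩
      have hsplit : (∫ s in (0:ℝ)..t, gm s)
          = ((∫ s in (0:ℝ)..t, g s) + ∫ s in (0:ℝ)..t, g' s) / 2 := by
        rw [← intervalIntegral.integral_add (hgi 0 t (left_mem_Icc.2 hT0) ht)
          (hg'i 0 t (left_mem_Icc.2 hT0) ht), ← intervalIntegral.integral_div]
      have h1 := hχ t ht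
      have h2 := hh' t ht
      have h3 := hχw t ht
      have h4 := hh'w t ht
      simp only [hsplit]
      linarith
    have hmin' := hmin _ _ hgmAdm
    -- pointwise identity ⇒ integral identity
    have hd2 : IntegrableOn (fun s => ((g s - g' s) / 2) ^ 2) (Icc 0 T) := by
      have : (fun s => ((g s - g' s) / 2) ^ 2)
          = fun s => (g s ^ 2 + g' s ^ 2) / 2 - gm s ^ 2 := by
        funext s; simp only [hgm_def]; ring
      rw [this]; exact hbnd.sub hgm2
    have hident : (∫ s in (0:ℝ)..T, ((g s - g' s) / 2) ^ 2)
        = (∫ s in (0:ℝ)..T, (g s ^ 2 + g' s ^ 2) / 2)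
          - ∫ s in (0:ℝ)..T, gm s ^ 2 := by
      rw [← intervalIntegral.integral_sub (hII _ hbnd 0 T (left_mem_Icc.2 hT0)
        (right_mem_Icc.2 hT0)) (hII _ hgm2 0 T (left_mem_Icc.2 hT0) (right_mem_Icc.2 hT0))]
      refine intervalIntegral.integral_congr fun s _ => ?_
      simp only [hgm_def]; ring
    have hsum : (∫ s in (0:ℝ)..T, (g s ^ 2 + g' s ^ 2) / 2)
        = ((∫ s in (0:ℝ)..T, g s ^ 2) + ∫ s in (0:ℝ)..T, g' s ^ 2) / 2 := by
      rw [← intervalIntegral.integral_add (hg2i 0 T (left_mem_Icc.2 hT0)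
        (right_mem_Icc.2 hT0)) (hg'2i 0 T (left_mem_Icc.2 hT0) (right_mem_Icc.2 hT0)),
        ← intervalIntegral.integral_div]
    have hzero : (∫ s in (0:ℝ)..T, ((g s - g' s) / 2) ^ 2) = 0 := by
      have hnn : 0 ≤ ∫ s in (0:ℝ)..T, ((g s - g' s) / 2) ^ 2 :=
        intervalIntegral.integral_nonneg hT0 fun u _ => sq_nonneg _
      have : (∫ s in (0:ℝ)..T, ((g s - g' s) / 2) ^ 2) ≤ 0 := by
        rw [hident, hsum]; linarith
      linarith
    -- conclude g = g' a.e. on (0, T]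
    have haez : (fun s => ((g s - g' s) / 2) ^ 2) =ᵐ[volume.restrict (Ioc (0:ℝ) T)] 0 := by
      rw [intervalIntegral.integral_of_le hT0] at hzero
      exact (integral_eq_zero_iff_of_nonneg_ae
        (Filter.Eventually.of_forall fun s => sq_nonneg _)
        (hd2.mono_set Ioc_subset_Icc_self)).mp hzero
    have hae : ∀ᵐ x : ℝ, x ∈ Ioc (0:ℝ) T → g x = g' x := by
      have := (ae_restrict_iff' measurableSet_Ioc).mp haez
      filter_upwards [this] with x hx hmem
      have h0 := hx hmem
      simp only [Pi.zero_apply] at h0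
      have h1 : (g x - g' x) / 2 = 0 := pow_eq_zero_iff two_ne_zero |>.mp h0
      linarith [h1]
    intro t ht
    have hint_eq : (∫ s in (0:ℝ)..t, g' s) = ∫ s in (0:ℝ)..t, g s := by
      refine intervalIntegral.integral_congr_ae ?_
      filter_upwards [hae] with x hx hmem
      rw [uIoc_of_le ht.1] at hmem
      exact (hx ⟨hmem.1, hmem.2.trans ht.2⟩).symm
    rw [hh' t ht, hint_eq, ← hχ t ht]
  -- Monotonicity
  have hmono : MonotoneOn χ (Icc 0 T) := by
    set gp : ℝ → ℝ := fun s => max (g s) 0 with hgp_def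
    have hgp1 : IntegrableOn gp (Icc 0 T) := hg1.pos_part
    have hsqle : ∀ s, gp s ^ 2 ≤ g s ^ 2 := by
      intro s
      simp only [hgp_def]
      rcases le_total (g s) 0 with h | h
      · rw [max_eq_right h]; nlinarith [sq_nonneg (g s)]
      · rw [max_eq_left h]
    have hgp2 : IntegrableOn (fun s => gp s ^ 2) (Icc 0 T) := by
      refine Integrable.mono' hg2 ?_ ?_
      · exact hgp1.aestronglyMeasurable.pow 2
      · exact Filter.Eventually.of_forall fun s => by
          rw [Real.norm_eq_abs, abs_of_nonneg (sq_nonneg _)]; exact hsqle s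
    have hgpi := hII gp hgp1
    have hgpAdm : Adm T r w (fun t => r + ∫ s in (0:ℝ)..t, gp s) gp := by
      refine ⟨hgp1, hgp2, fun t ht => rfl, fun t ht => ?_⟩
      have hge : (∫ s in (0:ℝ)..t, g s) ≤ ∫ s in (0:ℝ)..t, gp s :=
        intervalIntegral.integral_mono_on ht.1 (hgi 0 t (left_mem_Icc.2 hT0) ht)
          (hgpi 0 t (left_mem_Icc.2 hT0) ht) fun x _ => le_max_left _ _
      have h1 := hχ t ht
      have h3 := hχw t ht
      show w t ≤ r + ∫ s in (0:ℝ)..t, gp s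
      linarith
    have hele : (∫ s in (0:ℝ)..T, gp s ^ 2) ≤ ∫ s in (0:ℝ)..T, g s ^ 2 :=
      intervalIntegral.integral_mono_on hT0
        (hII _ hgp2 0 T (left_mem_Icc.2 hT0) (right_mem_Icc.2 hT0))
        (hg2i 0 T (left_mem_Icc.2 hT0) (right_mem_Icc.2 hT0)) fun x _ => hsqle x
    have heq := key _ _ hgpAdm hele
    intro s hs t ht hst
    have h1 : r + (∫ u in (0:ℝ)..s, gp u) = χ s := heq s hs
    have h2 : r + (∫ u in (0:ℝ)..t, gp u) = χ t := heq t ht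
    have hsub : (∫ u in (0:ℝ)..t, gp u) - (∫ u in (0:ℝ)..s, gp u) = ∫ u in s..t, gp u :=
      intervalIntegral.integral_interval_sub_left (hgpi 0 t (left_mem_Icc.2 hT0) ht)
        (hgpi 0 s (left_mem_Icc.2 hT0) hs)
    have hnn : 0 ≤ ∫ u in s..t, gp u :=
      intervalIntegral.integral_nonneg hst fun u _ => le_max_right _ _
    linarith
  refine ⟨?_, hmono⟩
  -- Continuity of χ on [0,T]
  have hcont : ContinuousOn χ (Icc 0 T) := by
    have hprim : ContinuousOn (fun x => ∫ s in (0:ℝ)..x, g s) (Icc 0 T) := by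
      have := intervalIntegral.continuousOn_primitive_interval
        (f := g) (a := (0:ℝ)) (b := T) (μ := volume) (by rwa [uIcc_of_le hT0])
      rwa [uIcc_of_le hT0] at this
    exact (continuousOn_const.add hprim).congr fun t ht => hχ t ht
  -- the chord inequality
  have chord : ∀ x ∈ Icc (0:ℝ) T, ∀ y ∈ Icc (0:ℝ) T, x < y → ∀ p ∈ Icc x y,
      χ x + (χ y - χ x) / (y - x) * (p - x) ≤ χ p := by
    intro x hx y hy hxy p hp
    by_contra hcon
    push_neg at hcon
    set c : ℝ := (χ y - χ x) / (y - x) with hc_def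
    have hyx : (0:ℝ) < y - x := sub_pos.2 hxy
    have hcyx : c * (y - x) = χ y - χ x := div_mul_cancel₀ _ hyx.ne'
    -- p is strictly inside (x, y)
    have hxp : x < p := by
      rcases eq_or_lt_of_le hp.1 with h | h
      · exfalso; rw [← h] at hcon; simp at hcon
      · exact h
    have hpy : p < y := by
      rcases eq_or_lt_of_le hp.2 with h | h
      · exfalso; rw [h] at hcon; nlinarith [hcon]
      · exact h
    have hxT : Icc x y ⊆ Icc (0:ℝ) T := Icc_subset_Icc hx.1 hy.2
    -- D t := χ t - (χ x + c * (t - x)) is continuous on [x,y]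
    have hD : ContinuousOn (fun t => χ t - (χ x + c * (t - x))) (Icc x y) :=
      (hcont.mono hxT).sub (Continuous.continuousOn (by continuity))
    -- left contact point α
    set K₁ : Set ℝ := Icc x p ∩ (fun t => χ t - (χ x + c * (t - x))) ⁻¹' Ici 0 with hK₁_def
    have hK₁closed : IsClosed K₁ :=
      (hD.mono (Icc_subset_Icc le_rfl hp.2)).preimage_isClosed_of_isClosed
        isClosed_Icc isClosed_Ici
    have hK₁ne : K₁.Nonempty := ⟨x, ⟨left_mem_Icc.2 hp.1, by simp⟩⟩
    have hK₁bdd : BddAbove K₁ := (BddAbove.mono inter_subset_left (bddAbove_Icc))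
    set α : ℝ := sSup K₁ with hα_def
    have hαK : α ∈ K₁ := hK₁closed.csSup_mem hK₁ne hK₁bdd
    have hαx : x ≤ α := hαK.1.1
    have hαp : α < p := by
      rcases eq_or_lt_of_le hαK.1.2 with h | h
      · exfalso
        have := hαK.2
        rw [h] at this
        simp only [mem_preimage, mem_Ici] at this
        linarith
      · exact h
    have hK₁lt : ∀ t, α < t → t ≤ p → χ t < χ x + c * (t - x) := by
      intro t h1 h2
      by_contra hcon2
      push_neg at hcon2
      have : t ∈ K₁ := ⟨⟨hαx.trans h1.le, h2⟩, by simpa [sub_nonneg] using hcon2⟩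
      exact absurd (le_csSup hK₁bdd this) (not_le.2 h1)
    -- right contact point β
    set K₂ : Set ℝ := Icc p y ∩ (fun t => χ t - (χ x + c * (t - x))) ⁻¹' Ici 0 with hK₂_def
    have hK₂closed : IsClosed K₂ :=
      (hD.mono (Icc_subset_Icc hp.1 le_rfl)).preimage_isClosed_of_isClosed
        isClosed_Icc isClosed_Ici
    have hK₂ne : K₂.Nonempty := by
      refine ⟨y, ⟨right_mem_Icc.2 hp.2, ?_⟩⟩
      simp only [mem_preimage, mem_Ici]
      nlinarith [hcyx]
    have hK₂bdd : BddBelow K₂ := BddBelow.mono inter_subset_left bddBelow_Icc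
    set β : ℝ := sInf K₂ with hβ_def
    have hβK : β ∈ K₂ := hK₂closed.csInf_mem hK₂ne hK₂bdd
    have hβy : β ≤ y := hβK.1.2
    have hpβ : p < β := by
      rcases eq_or_lt_of_le hβK.1.1 with h | h
      · exfalso
        have := hβK.2
        rw [← h] at this
        simp only [mem_preimage, mem_Ici] at this
        linarith
      · exact h
    have hK₂lt : ∀ t, p ≤ t → t < β → χ t < χ x + c * (t - x) := by
      intro t h1 h2
      by_contra hcon2
      push_neg at hcon2
      have : t ∈ K₂ := ⟨⟨h1, (h2.le.trans hβy)⟩, by simpa [sub_nonneg] using hcon2⟩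
      exact absurd (csInf_le hK₂bdd this) (not_le.2 h2)
    have hαβ : α < β := hαp.trans hpβ
    have hβα : (0:ℝ) < β - α := sub_pos.2 hαβ
    have hα0T : α ∈ Icc (0:ℝ) T := hxT ⟨hαx, hαK.1.2.trans hp.2⟩
    have hβ0T : β ∈ Icc (0:ℝ) T := hxT ⟨hp.1.trans hβK.1.1, hβy⟩
    have hmem0 : (0:ℝ) ∈ Icc (0:ℝ) T := left_mem_Icc.2 hT0
    have hαD : 0 ≤ χ α - (χ x + c * (α - x)) := hαK.2
    have hβD : 0 ≤ χ β - (χ x + c * (β - x)) := hβK.2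
    have hlt : ∀ t, α < t → t < β → χ t < χ x + c * (t - x) := by
      intro t h1 h2
      rcases le_or_gt t p with h | h
      · exact hK₁lt t h1 h
      · exact hK₂lt t h.le h2
    set c' : ℝ := (χ β - χ α) / (β - α) with hc'_def
    have hc'βα : c' * (β - α) = χ β - χ α := div_mul_cancel₀ _ hβα.ne'
    set g' : ℝ → ℝ := fun s => if s ∈ Ioc α β then c' else g s with hg'_def
    have hconst : IntegrableOn (fun _ : ℝ => c') (Icc 0 T) :=
      integrableOn_const measure_Icc_lt_top.ne
    have hconst2 : IntegrableOn (fun _ : ℝ => c' ^ 2) (Icc 0 T) :=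
      integrableOn_const measure_Icc_lt_top.ne
    have hg'1 : IntegrableOn g' (Icc 0 T) := by
      have hrep : g' = fun s => g s + (Ioc α β).indicator (fun u => c' - g u) s := by
        funext s
        by_cases hs : s ∈ Ioc α β
        · simp only [hg'_def]; rw [if_pos hs, indicator_of_mem hs]; ring
        · simp only [hg'_def]; rw [if_neg hs, indicator_of_notMem hs]; ring
      rw [hrep]
      exact hg1.add ((hconst.sub hg1).indicator measurableSet_Ioc)
    have hg'2 : IntegrableOn (fun s => g' s ^ 2) (Icc 0 T) := by
      have hrep : (fun s => g' s ^ 2)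
          = fun s => g s ^ 2 + (Ioc α β).indicator (fun u => c' ^ 2 - g u ^ 2) s := by
        funext s
        by_cases hs : s ∈ Ioc α β
        · simp only [hg'_def]; rw [if_pos hs, indicator_of_mem hs]; ring
        · simp only [hg'_def]; rw [if_neg hs, indicator_of_notMem hs]; ring
      rw [hrep]
      exact hg2.add ((hconst2.sub hg2).indicator measurableSet_Ioc)
    have hg'i := hII g' hg'1
    have hg'2i := hII _ hg'2
    -- value of the competitor's primitive on the three pieces
    have hint1 : ∀ t, 0 ≤ t → t ≤ α → (∫ s in (0:ℝ)..t, g' s) = ∫ s in (0:ℝ)..t, g s := by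
      intro t h0t htα
      refine intervalIntegral.integral_congr_ae (Filter.Eventually.of_forall fun s hs => ?_)
      rw [uIoc_of_le h0t] at hs
      have hns : s ∉ Ioc α β := fun hmem => absurd hmem.1 (not_lt.2 (hs.2.trans htα))
      simp only [hg'_def]; rw [if_neg hns]
    have hintc : ∀ t, α ≤ t → t ≤ β → (∫ s in α..t, g' s) = (t - α) * c' := by
      intro t h1 h2
      have hcg : (∫ s in α..t, g' s) = ∫ s in α..t, (fun _ => c') s := by
        refine intervalIntegral.integral_congr_ae (Filter.Eventually.of_forall fun s hs => ?_)
        rw [uIoc_of_le h1] at hs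
        have hms : s ∈ Ioc α β := ⟨hs.1, hs.2.trans h2⟩
        simp only [hg'_def]; rw [if_pos hms]
      rw [hcg, intervalIntegral.integral_const, smul_eq_mul]
    have hint3 : ∀ t, β ≤ t → (∫ s in β..t, g' s) = ∫ s in β..t, g s := by
      intro t h1
      refine intervalIntegral.integral_congr_ae (Filter.Eventually.of_forall fun s hs => ?_)
      rw [uIoc_of_le h1] at hs
      have hns : s ∉ Ioc α β := fun hmem => absurd hmem.2 (not_le.2 hs.1)
      simp only [hg'_def]; rw [if_neg hns]
    have hval1 : ∀ t, t ∈ Icc (0:ℝ) T → t ≤ α → (r + ∫ s in (0:ℝ)..t, g' s) = χ t := by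
      intro t ht htα
      rw [hint1 t ht.1 htα, ← hχ t ht]
    have hval2 : ∀ t, α ≤ t → t ≤ β → (r + ∫ s in (0:ℝ)..t, g' s) = χ α + (t - α) * c' := by
      intro t h1 h2
      have hsplit : (∫ s in (0:ℝ)..t, g' s)
          = (∫ s in (0:ℝ)..α, g' s) + ∫ s in α..t, g' s :=
        (intervalIntegral.integral_add_adjacent_intervals (hg'i 0 α hmem0 hα0T)
          (hg'i α t hα0T ⟨hα0T.1.trans h1, h2.trans hβ0T.2⟩)).symm
      rw [hsplit, hint1 α hα0T.1 le_rfl, hintc t h1 h2, hχ α hα0T]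
      ring
    have hvalβ : (r + ∫ s in (0:ℝ)..β, g' s) = χ β := by
      rw [hval2 β hαβ.le le_rfl]
      nlinarith [hc'βα]
    have hval3 : ∀ t, β ≤ t → t ∈ Icc (0:ℝ) T → (r + ∫ s in (0:ℝ)..t, g' s) = χ t := by
      intro t h1 ht
      have hsplit : (∫ s in (0:ℝ)..t, g' s)
          = (∫ s in (0:ℝ)..β, g' s) + ∫ s in β..t, g' s :=
        (intervalIntegral.integral_add_adjacent_intervals (hg'i 0 β hmem0 hβ0T)
          (hg'i β t hβ0T ht)).symm
      have h₂ : (∫ s in β..t, g' s) = ∫ s in β..t, g s := hint3 t h1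
      have h₃ : (∫ s in (0:ℝ)..t, g s) - (∫ s in (0:ℝ)..β, g s) = ∫ s in β..t, g s :=
        intervalIntegral.integral_interval_sub_left (hgi 0 t hmem0 ht)
          (hgi 0 β hmem0 hβ0T)
      have h₄ := hχ t ht
      have h₅ := hχ β hβ0T
      have h₆ : (∫ s in (0:ℝ)..β, g' s) = χ β - r := by linarith [hvalβ]
      rw [hsplit, h₂, h₆]
      linarith [h₃]
    -- the chord over [α,β] dominates the original chord ℓ
    have hLge : ∀ t, α ≤ t → t ≤ β → χ x + c * (t - x) ≤ χ α + (t - α) * c' := by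
      intro t h1 h2
      have key2 : 0 ≤ (χ α - α * c' - χ x + c * x) + (c' - c) * t := by
        refine affine_nonneg_aux h1 h2 ?_ ?_
        · linarith [hαD]
        · linarith [hβD, hc'βα]
      linarith [key2]
    -- the competitor is admissible
    have hg'w : ∀ t ∈ Icc (0:ℝ) T, w t ≤ r + ∫ s in (0:ℝ)..t, g' s := by
      intro t ht
      rcases le_or_gt t α with h | h
      · rw [hval1 t ht h]; exact hχw t ht
      rcases le_or_gt β t with h2 | h2
      · rw [hval3 t h2 ht]; exact hχw t ht
      · rw [hval2 t h.le h2.le]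
        have h3 := hlt t h h2
        have h4 := hLge t h.le h2.le
        have h5 := hχw t ht
        linarith
    have hAdm' : Adm T r w (fun t => r + ∫ s in (0:ℝ)..t, g' s) g' :=
      ⟨hg'1, hg'2, fun t ht => rfl, hg'w⟩
    -- energy comparison
    have hmemT : T ∈ Icc (0:ℝ) T := right_mem_Icc.2 hT0
    have hsplitg' : (∫ s in (0:ℝ)..T, g' s ^ 2)
        = ((∫ s in (0:ℝ)..α, g' s ^ 2) + ∫ s in α..β, g' s ^ 2) + ∫ s in β..T, g' s ^ 2 := by
      rw [intervalIntegral.integral_add_adjacent_intervals (hg'2i 0 α hmem0 hα0T)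
        (hg'2i α β hα0T hβ0T), intervalIntegral.integral_add_adjacent_intervals
        (hg'2i 0 β hmem0 hβ0T) (hg'2i β T hβ0T hmemT)]
    have hsplitg : (∫ s in (0:ℝ)..T, g s ^ 2)
        = ((∫ s in (0:ℝ)..α, g s ^ 2) + ∫ s in α..β, g s ^ 2) + ∫ s in β..T, g s ^ 2 := by
      rw [intervalIntegral.integral_add_adjacent_intervals (hg2i 0 α hmem0 hα0T)
        (hg2i α β hα0T hβ0T), intervalIntegral.integral_add_adjacent_intervals
        (hg2i 0 β hmem0 hβ0T) (hg2i β T hβ0T hmemT)]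
    have hcong1 : (∫ s in (0:ℝ)..α, g' s ^ 2) = ∫ s in (0:ℝ)..α, g s ^ 2 := by
      refine intervalIntegral.integral_congr_ae (Filter.Eventually.of_forall fun s hs => ?_)
      rw [uIoc_of_le hα0T.1] at hs
      have hns : s ∉ Ioc α β := fun hmem => absurd hmem.1 (not_lt.2 hs.2)
      simp only [hg'_def]; rw [if_neg hns]
    have hcong3 : (∫ s in β..T, g' s ^ 2) = ∫ s in β..T, g s ^ 2 := by
      refine intervalIntegral.integral_congr_ae (Filter.Eventually.of_forall fun s hs => ?_)
      rw [uIoc_of_le hβ0T.2] at hs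
      have hns : s ∉ Ioc α β := fun hmem => absurd hmem.2 (not_le.2 hs.1)
      simp only [hg'_def]; rw [if_neg hns]
    have hcongc : (∫ s in α..β, g' s ^ 2) = (β - α) * c' ^ 2 := by
      have hcg : (∫ s in α..β, g' s ^ 2) = ∫ s in α..β, (fun _ => c' ^ 2) s := by
        refine intervalIntegral.integral_congr_ae (Filter.Eventually.of_forall fun s hs => ?_)
        rw [uIoc_of_le hαβ.le] at hs
        simp only [hg'_def]; rw [if_pos hs]
      rw [hcg, intervalIntegral.integral_const, smul_eq_mul]
    have hgαβ : (∫ s in α..β, g s) = χ β - χ α := by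
      have hsub := intervalIntegral.integral_interval_sub_left (hgi 0 β hmem0 hβ0T)
        (hgi 0 α hmem0 hα0T)
      have h₄ := hχ β hβ0T
      have h₅ := hχ α hα0T
      linarith [hsub]
    have hCS : (β - α) * c' ^ 2 ≤ ∫ s in α..β, g s ^ 2 := by
      have h0 : 0 ≤ ∫ s in α..β, (g s - c') ^ 2 :=
        intervalIntegral.integral_nonneg hαβ.le fun u _ => sq_nonneg _
      have hexp : (∫ s in α..β, (g s - c') ^ 2)
          = ((∫ s in α..β, g s ^ 2) - ∫ s in α..β, (2 * c') * g s)
            + ∫ s in α..β, (fun _ => c' ^ 2) s := by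
        rw [← intervalIntegral.integral_sub (hg2i α β hα0T hβ0T)
          ((hgi α β hα0T hβ0T).const_mul _),
          ← intervalIntegral.integral_add ((hg2i α β hα0T hβ0T).sub
            ((hgi α β hα0T hβ0T).const_mul _)) intervalIntegrable_const]
        refine intervalIntegral.integral_congr fun s _ => ?_
        ring
      have hmul : (∫ s in α..β, (2 * c') * g s) = (2 * c') * ∫ s in α..β, g s :=
        intervalIntegral.integral_const_mul _ _
      have h9 : (2 * c') * (∫ s in α..β, g s) = 2 * ((β - α) * c' ^ 2) := by
        rw [hgαβ, ← hc'βα]; ring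
      rw [hexp, hmul, intervalIntegral.integral_const, smul_eq_mul] at h0
      nlinarith [h0, h9]
    have hene : (∫ s in (0:ℝ)..T, g' s ^ 2) ≤ ∫ s in (0:ℝ)..T, g s ^ 2 := by
      rw [hsplitg', hsplitg, hcong1, hcong3, hcongc]
      linarith [hCS]
    -- conclusion : the competitor coincides with χ, contradiction at p
    have hfin : (r + ∫ s in (0:ℝ)..p, g' s) = χ p := key _ _ hAdm' hene p (hxT hp)
    have hfin2 : χ p = χ α + (p - α) * c' := by
      rw [← hfin]; exact hval2 p hαp.le hpβ.le
    have hge := hLge p hαp.le hpβ.le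
    linarith [hcon, hfin2, hge]
  -- concavity from the chord inequality
  refine ⟨convex_Icc _ _, ?_⟩
  intro x hx y hy a b ha hb hab
  simp only [smul_eq_mul]
  rcases lt_trichotomy x y with hxy | hxy | hxy
  · have hb' : a = 1 - b := by linarith
    have hp : a * x + b * y ∈ Icc x y := by
      constructor
      · rw [hb']; nlinarith [mul_nonneg hb (sub_nonneg.2 hxy.le)]
      · rw [hb']; nlinarith [mul_nonneg hb (sub_nonneg.2 hxy.le),
          mul_nonneg (by linarith : (0:ℝ) ≤ 1 - b) (sub_nonneg.2 hxy.le)]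
    have hch := chord x hx y hy hxy _ hp
    have hyx : y - x ≠ 0 := sub_ne_zero.2 (ne_of_gt hxy)
    have h5 : a * x + b * y - x = b * (y - x) := by rw [hb']; ring
    have h6 : (χ y - χ x) / (y - x) * (a * x + b * y - x) = b * (χ y - χ x) := by
      rw [h5]; field_simp
    have h7 : a * χ x + b * χ y = χ x + b * (χ y - χ x) := by rw [hb']; ring
    linarith
  · subst hxy
    have h5 : a * x + b * x = x := by
      have : (a + b) * x = x := by rw [hab, one_mul]
      linarith [this]
    rw [h5]
    have : (a + b) * χ x = χ x := by rw [hab, one_mul]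
    linarith [this]
  · have ha' : b = 1 - a := by linarith
    have hp : a * x + b * y ∈ Icc y x := by
      constructor
      · rw [ha']; nlinarith [mul_nonneg ha (sub_nonneg.2 hxy.le)]
      · rw [ha']; nlinarith [mul_nonneg ha (sub_nonneg.2 hxy.le),
          mul_nonneg (by linarith : (0:ℝ) ≤ 1 - a) (sub_nonneg.2 hxy.le)]
    have hch := chord y hy x hx hxy _ hp
    have hyx : x - y ≠ 0 := sub_ne_zero.2 (ne_of_gt hxy)
    have h5 : a * x + b * y - y = a * (x - y) := by rw [ha']; ring
    have h6 : (χ x - χ y) / (x - y) * (a * x + b * y - y) = a * (χ x - χ y) := by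
      rw [h5]; field_simp
    have h7 : a * χ x + b * χ y = χ y + a * (χ x - χ y) := by rw [ha']; ring
    linarith
end

section
/- Let w : [0,T] → ℝ be continuous with r < max w, and let χ minimize energy over {h ∈ AC[0,T] : h(0) = r, h ≥ w}. Then χ(T) = max_{0≤t≤T} w(t), and χ is constant on [t_max, T] where t_max is the first time w attains its maximum. -/
/-!
The minimizer `χ` is continuous with `χ 0 = r < max w ≤ χ tmax`, so it reaches the level
`max w` at some time `s ≤ tmax`. Stopping `χ` at `s` stays above the obstacle, because `w` never
exceeds its maximum, and it costs only the energy of `χ` on `[0, s]`. Minimality therefore forces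
`χ' = 0` a.e. on `[s, T]`, so `χ` equals `max w` on `[s, T] ⊇ [tmax, T]`.
-/

open MeasureTheory Set

theorem Set.indicator_sq {α M : Type*} [MonoidWithZero M] (s : Set α) (g : α → M) :
    (fun x => s.indicator g x ^ 2) = s.indicator (fun x => g x ^ 2) :=
  (indicator_comp_of_zero (g := fun y : M => y ^ 2) (zero_pow two_ne_zero)).symm

theorem MeasureTheory.IntegrableOn.intervalIntegrable_of_mem_Icc {E : Type*}
    [NormedAddCommGroup E] {f : ℝ → E} {a b x y : ℝ} (hf : IntegrableOn f (Icc a b))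
    (hx : x ∈ Icc a b) (hy : y ∈ Icc a b) : IntervalIntegrable f volume x y :=
  (hf.mono_set (uIcc_subset_Icc hx hy)).intervalIntegrable

namespace intervalIntegral

theorem integral_indicator_Iic {E : Type*} [NormedAddCommGroup E] [NormedSpace ℝ E]
    {f : ℝ → E} {a b s : ℝ} (hab : a ≤ b) (has : a ≤ s) :
    ∫ x in a..b, (Iic s).indicator f x = ∫ x in a..min b s, f x := by
  rw [integral_of_le hab, setIntegral_indicator measurableSet_Iic, Ioc_inter_Iic,
    integral_of_le (le_min hab has)]

theorem integral_eq_zero_of_integral_sq_eq_zero {g : ℝ → ℝ} {a b t : ℝ}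
    (hg : IntegrableOn (fun x => g x ^ 2) (Ioc a b)) (h0 : ∫ x in a..b, g x ^ 2 = 0)
    (hat : a ≤ t) (htb : t ≤ b) : ∫ x in a..t, g x = 0 := by
  rw [integral_of_le (hat.trans htb),
    integral_eq_zero_iff_of_nonneg (fun x => sq_nonneg (g x)) hg] at h0
  have hsq : ∀ᵐ x ∂volume.restrict (Ioc a t), g x ^ 2 = 0 :=
    ae_restrict_of_ae_restrict_of_subset (Ioc_subset_Ioc_right htb) h0
  rw [integral_of_le hat]
  exact integral_eq_zero_of_ae (hsq.mono fun x hx => pow_eq_zero_iff two_ne_zero |>.mp hx)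

end intervalIntegral

namespace Adm

variable {T r : ℝ} {w h g : ℝ → ℝ}

theorem apply_zero (hadm : Adm T r w h g) (hT : 0 ≤ T) : h 0 = r := by
  simpa using hadm.2.2.1 0 ⟨le_rfl, hT⟩

theorem continuousOn (hadm : Adm T r w h g) : ContinuousOn h (Icc 0 T) := by
  rcases le_or_gt 0 T with hT | hT
  · have hg : IntegrableOn g (uIcc 0 T) := by rw [uIcc_of_le hT]; exact hadm.1
    exact (continuousOn_const.add
      ((intervalIntegral.continuousOn_primitive_interval hg).mono Icc_subset_uIcc)).congr
      hadm.2.2.1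
  · simp [Icc_eq_empty_of_lt hT]

theorem freeze (hadm : Adm T r w h g) {s : ℝ} (hs : 0 ≤ s)
    (hw : ∀ t ∈ Icc s T, w t ≤ h s) :
    Adm T r w (fun t => h (min t s)) ((Iic s).indicator g) := by
  obtain ⟨hg, hg2, hrep, hge⟩ := hadm
  refine ⟨hg.indicator measurableSet_Iic, ?_, fun t ht => ?_, fun t ht => ?_⟩
  · rw [Set.indicator_sq]
    exact hg2.indicator measurableSet_Iic
  · rw [intervalIntegral.integral_indicator_Iic ht.1 hs]
    exact hrep _ ⟨le_min ht.1 hs, (min_le_left _ _).trans ht.2⟩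
  · rcases le_total t s with hts | hst
    · simpa [min_eq_left hts] using hge t ht
    · simpa [min_eq_right hst] using hw t ⟨hst, ht.2⟩

theorem eq_of_integral_sq_eq_zero (hadm : Adm T r w h g) {s t : ℝ} (hs : 0 ≤ s) (hst : s ≤ t)
    (htT : t ≤ T) (h0 : ∫ x in s..T, g x ^ 2 = 0) : h t = h s := by
  obtain ⟨hg, hg2, hrep, -⟩ := hadm
  have hsI : s ∈ Icc 0 T := ⟨hs, hst.trans htT⟩
  have htI : t ∈ Icc 0 T := ⟨hs.trans hst, htT⟩
  have hflat : ∫ x in s..t, g x = 0 :=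
    intervalIntegral.integral_eq_zero_of_integral_sq_eq_zero
      (hg2.mono_set (Ioc_subset_Icc_self.trans (Icc_subset_Icc_left hs))) h0 hst htT
  rw [hrep t htI, hrep s hsI, ← intervalIntegral.integral_add_adjacent_intervals
    (hg.intervalIntegrable_of_mem_Icc (left_mem_Icc.2 (hs.trans (hst.trans htT))) hsI)
    (hg.intervalIntegrable_of_mem_Icc hsI htI), hflat, add_zero]

end Adm

theorem stmt_8_general (T r : ℝ) (w : ℝ → ℝ)
    (hw : ContinuousOn w (Icc 0 T))
    (hrmax : ∃ t ∈ Icc (0:ℝ) T, r < w t)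
    (tmax : ℝ) (htmax_mem : tmax ∈ Icc (0:ℝ) T)
    (htmax_max : w tmax = sSup (w '' Icc (0:ℝ) T))
    (χ g : ℝ → ℝ) (hadm : Adm T r w χ g)
    (hmin : ∀ h g', Adm T r w h g' →
      (∫ s in (0:ℝ)..T, g s ^ 2) ≤ ∫ s in (0:ℝ)..T, g' s ^ 2) :
    χ T = sSup (w '' Icc (0:ℝ) T) ∧ ∀ t ∈ Icc tmax T, χ t = χ tmax := by
  set M := sSup (w '' Icc (0:ℝ) T)
  have hT : 0 ≤ T := htmax_mem.1.trans htmax_mem.2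
  have hleM : ∀ t ∈ Icc (0:ℝ) T, w t ≤ M := fun t ht =>
    le_csSup (isCompact_Icc.image_of_continuousOn hw).bddAbove (mem_image_of_mem w ht)
  obtain ⟨t₀, ht₀, hrt₀⟩ := hrmax
  obtain ⟨s, ⟨hs0, hstmax⟩, hχs⟩ : ∃ s ∈ Icc 0 tmax, χ s = M :=
    intermediate_value_Icc htmax_mem.1 (hadm.continuousOn.mono (Icc_subset_Icc_right htmax_mem.2))
      ⟨hadm.apply_zero hT ▸ (hrt₀.trans_le (hleM t₀ ht₀)).le,
        htmax_max ▸ hadm.2.2.2 tmax htmax_mem⟩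
  have hsT : s ≤ T := hstmax.trans htmax_mem.2
  have hfreeze := hmin _ _ (hadm.freeze hs0 fun t ht => hχs ▸ hleM t ⟨hs0.trans ht.1, ht.2⟩)
  rw [Set.indicator_sq, intervalIntegral.integral_indicator_Iic hT hs0, min_eq_right hsT,
    ← intervalIntegral.integral_add_adjacent_intervals
      (hadm.2.1.intervalIntegrable_of_mem_Icc (left_mem_Icc.2 hT) ⟨hs0, hsT⟩)
      (hadm.2.1.intervalIntegrable_of_mem_Icc ⟨hs0, hsT⟩ (right_mem_Icc.2 hT))] at hfreeze
  have htail : ∫ x in s..T, g x ^ 2 = 0 :=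
    le_antisymm (by linarith) (intervalIntegral.integral_nonneg hsT fun _ _ => sq_nonneg _)
  have hconst : ∀ t ∈ Icc s T, χ t = M := fun t ht =>
    (hadm.eq_of_integral_sq_eq_zero hs0 ht.1 ht.2 htail).trans hχs
  exact ⟨hconst T ⟨hsT, le_rfl⟩, fun t ht =>
    (hconst t ⟨hstmax.trans ht.1, ht.2⟩).trans (hconst tmax ⟨hstmax, htmax_mem.2⟩).symm⟩

/-- if `w` is continuous with `w 0 < r < max_{[0,T]} w`, `χ` minimizes
the energy over admissible functions, and `tmax` is the first time `w` attains its
maximum, then `χ T = max_{[0,T]} w` and `χ` is constant on `[tmax, T]`. -/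
theorem stmt_8 (T r : ℝ) (hT : 0 < T) (w : ℝ → ℝ)
    (hw : ContinuousOn w (Icc 0 T)) (hw0 : w 0 < r)
    (hrmax : ∃ t ∈ Icc (0:ℝ) T, r < w t)
    (tmax : ℝ) (htmax_mem : tmax ∈ Icc (0:ℝ) T)
    (htmax_max : w tmax = sSup (w '' Icc (0:ℝ) T))
    (htmax_first : ∀ t ∈ Icc (0:ℝ) T, w t = sSup (w '' Icc (0:ℝ) T) → tmax ≤ t)
    (χ g : ℝ → ℝ) (hadm : Adm T r w χ g)
    (hmin : ∀ h g', Adm T r w h g' →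
      (∫ s in (0:ℝ)..T, g s ^ 2) ≤ ∫ s in (0:ℝ)..T, g' s ^ 2) :
    χ T = sSup (w '' Icc (0:ℝ) T) ∧ ∀ t ∈ Icc tmax T, χ t = χ tmax :=
  stmt_8_general T r w hw hrmax tmax htmax_mem htmax_max χ g hadm hmin
end

section
/- Let q(t) := 2 E(X/√t − 1)₊ for t > 0, where X is a standard normal random variable and x₊ := max(x,0). Then q is a probability density on (0,∞), i.e., q(t) ≥ 0 and ∫₀^∞ q(t) dt = 1. -/
open MeasureTheory Set

section Aux
open Real ProbabilityTheory

lemma gauss_eq : gaussianReal 0 1 =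
    (volume : Measure ℝ).withDensity (fun x => ((gaussianPDFReal 0 1 x).toNNReal : ENNReal)) := by
  rw [gaussianReal_of_var_ne_zero 0 one_ne_zero]
  rfl

lemma gauss_integral (g : ℝ → ℝ) :
    ∫ x, g x ∂(gaussianReal 0 1) = ∫ x, gaussianPDFReal 0 1 x * g x := by
  rw [gauss_eq, integral_withDensity_eq_integral_smul
    (measurable_gaussianPDFReal 0 1).real_toNNReal]
  congr 1; ext x
  simp [NNReal.smul_def, Real.coe_toNNReal _ (gaussianPDFReal_nonneg 0 1 x)]

lemma gauss_integrable {g : ℝ → ℝ}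
    (hi : Integrable (fun x => gaussianPDFReal 0 1 x * g x)) :
    Integrable g (gaussianReal 0 1) := by
  rw [gauss_eq, integrable_withDensity_iff_integrable_smul
    (measurable_gaussianPDFReal 0 1).real_toNNReal]
  refine hi.congr (Filter.Eventually.of_forall fun x => ?_)
  simp [NNReal.smul_def, Real.coe_toNNReal _ (gaussianPDFReal_nonneg 0 1 x)]

lemma pdf_eq (x : ℝ) : gaussianPDFReal 0 1 x = (√(2*π))⁻¹ * rexp (-(1/2) * x^2) := by
  rw [gaussianPDFReal]
  push_cast
  ring_nf

lemma int_abs_exp : Integrable (fun x : ℝ => |x| * rexp (-(1/2) * x^2)) := by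
  have h := (integrable_mul_exp_neg_mul_sq (b := 1/2) (by norm_num)).abs
  refine h.congr (Filter.Eventually.of_forall fun x => ?_)
  simp only [abs_mul, Real.abs_exp]

lemma int_sq_exp : Integrable (fun x : ℝ => x^2 * rexp (-(1/2) * x^2)) := by
  have h := integrable_rpow_mul_exp_neg_mul_sq (b := 1/2) (by norm_num) (s := 2) (by norm_num)
  refine h.congr (Filter.Eventually.of_forall fun x => ?_)
  simp only [rpow_two]

lemma half_moment : ∫ x : ℝ in Ioi 0, x^2 * rexp (-(1/2) * x^2) = √2 * √π / 2 := by
  have h1 := MeasureTheory.integral_comp_rpow_Ioi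
    (g := fun y => √y / 2 * rexp (-(1/2) * y)) (p := 2) two_ne_zero
  have h2 : ∫ x : ℝ in Ioi 0, x^2 * rexp (-(1/2) * x^2)
      = ∫ x : ℝ in Ioi 0, (|2| * x ^ ((2:ℝ)-1)) • (√(x ^ (2:ℝ)) / 2 * rexp (-(1/2) * x ^ (2:ℝ))) := by
    refine setIntegral_congr_fun measurableSet_Ioi fun x hx => ?_
    have hx0 : (0:ℝ) < x := hx
    rw [rpow_two, show ((2:ℝ)-1) = 1 by norm_num, rpow_one, sqrt_sq hx0.le, smul_eq_mul]
    rw [abs_of_nonneg (by norm_num : (0:ℝ) ≤ 2)]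
    ring
  rw [h2, h1]
  have h3 : ∫ y : ℝ in Ioi 0, √y / 2 * rexp (-(1/2) * y)
      = ∫ y : ℝ in Ioi 0, (1/2) * (y ^ ((3/2:ℝ)-1) * rexp (-(1/2 * y))) := by
    refine setIntegral_congr_fun measurableSet_Ioi fun y hy => ?_
    have hy0 : (0:ℝ) < y := hy
    rw [show ((3/2:ℝ)-1) = 1/2 by norm_num, ← sqrt_eq_rpow]
    ring_nf
  rw [h3, integral_const_mul, integral_rpow_mul_exp_neg_mul_Ioi (by norm_num) (by norm_num)]
  rw [show Real.Gamma (3/2) = Real.Gamma (1/2 + 1) by norm_num,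
    Real.Gamma_add_one (by norm_num), Real.Gamma_one_half_eq]
  rw [show ((1:ℝ)/(1/2)) = 2 by norm_num, show (3/2:ℝ) = 1 + 1/2 by norm_num,
    rpow_add (by norm_num), rpow_one, ← sqrt_eq_rpow]
  ring

lemma gauss_half_sq : ∫ x, (max x 0)^2 ∂(gaussianReal 0 1) = 1/2 := by
  rw [gauss_integral]
  have hind : (fun x => gaussianPDFReal 0 1 x * (max x 0)^2)
      = (Ioi (0:ℝ)).indicator (fun x => (√(2*π))⁻¹ * (x^2 * rexp (-(1/2) * x^2))) := by
    ext x
    rcases le_or_gt x 0 with hx | hx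
    · rw [indicator_of_notMem (by simpa using hx), max_eq_right hx]
      ring
    · rw [indicator_of_mem (mem_Ioi.mpr hx), max_eq_left hx.le, pdf_eq]
      ring
  rw [hind, integral_indicator measurableSet_Ioi, integral_const_mul, half_moment,
    sqrt_mul (by norm_num : (0:ℝ) ≤ 2)]
  have h2 : √2 ≠ 0 := by positivity
  have h3 : √π ≠ 0 := by positivity
  field_simp

lemma gauss_int_sq : Integrable (fun x => (max x 0)^2) (gaussianReal 0 1) := by
  refine gauss_integrable (Integrable.mono' (int_sq_exp.const_mul (√(2*π))⁻¹) ?_ ?_)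
  · exact ((measurable_gaussianPDFReal 0 1).mul
      ((measurable_id.max measurable_const).pow measurable_const)).aestronglyMeasurable
  · refine Filter.Eventually.of_forall fun x => ?_
    have h1 : (0:ℝ) ≤ gaussianPDFReal 0 1 x := gaussianPDFReal_nonneg 0 1 x
    have h2 : (max x 0)^2 ≤ x^2 := by
      have := abs_max_le_max_abs_abs (a := x) (b := (0:ℝ))
      have h3 : |max x 0| ≤ |x| := by
        rcases le_or_gt x 0 with hx | hx
        · rw [max_eq_right hx]; simp
        · rw [max_eq_left hx.le]
      calc (max x 0)^2 = |max x 0|^2 := (sq_abs _).symm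
        _ ≤ |x|^2 := by gcongr
        _ = x^2 := sq_abs x
    rw [Real.norm_eq_abs, abs_of_nonneg (by positivity), pdf_eq]
    have he : (0:ℝ) < rexp (-(1/2) * x^2) := exp_pos _
    have hc : (0:ℝ) ≤ (√(2*π))⁻¹ := by positivity
    calc (√(2*π))⁻¹ * rexp (-(1/2) * x^2) * (max x 0)^2
        ≤ (√(2*π))⁻¹ * rexp (-(1/2) * x^2) * x^2 := by gcongr
      _ = (√(2*π))⁻¹ * (x^2 * rexp (-(1/2) * x^2)) := by ring

lemma gauss_int_max {t : ℝ} (ht : 0 < t) :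
    Integrable (fun x => max (x / Real.sqrt t - 1) 0) (gaussianReal 0 1) := by
  have hs : (0:ℝ) < √t := Real.sqrt_pos.mpr ht
  refine gauss_integrable (Integrable.mono'
    (((int_abs_exp.const_mul (√t)⁻¹).add (integrable_exp_neg_mul_sq (b := 1/2)
      (by norm_num))).const_mul (√(2*π))⁻¹) ?_ ?_)
  · exact ((measurable_gaussianPDFReal 0 1).mul
      (((measurable_id.div_const _).sub measurable_const).max measurable_const)).aestronglyMeasurable
  · refine Filter.Eventually.of_forall fun x => ?_
    have h1 : (0:ℝ) ≤ gaussianPDFReal 0 1 x := gaussianPDFReal_nonneg 0 1 x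
    have h2 : max (x / √t - 1) 0 ≤ |x| / √t + 1 := by
      refine max_le ?_ (by positivity)
      have : x / √t ≤ |x| / √t := by gcongr; exact le_abs_self x
      linarith
    rw [Real.norm_eq_abs, abs_of_nonneg (mul_nonneg h1 (le_max_right _ _)), pdf_eq]
    have he : (0:ℝ) < rexp (-(1/2) * x^2) := exp_pos _
    calc (√(2*π))⁻¹ * rexp (-(1/2) * x^2) * max (x / √t - 1) 0
        ≤ (√(2*π))⁻¹ * rexp (-(1/2) * x^2) * (|x| / √t + 1) := by gcongr
      _ = (√(2*π))⁻¹ * ((√t)⁻¹ * (|x| * rexp (-(1/2) * x^2)) + rexp (-(1/2) * x^2)) := by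
          field_simp

lemma inner_t (x : ℝ) :
    ∫⁻ t in Ioi (0:ℝ), ENNReal.ofReal (max (x / Real.sqrt t - 1) 0)
      = ENNReal.ofReal ((max x 0)^2) := by
  rcases le_or_gt x 0 with hx | hx
  · have h0 : ∀ᵐ t ∂(volume.restrict (Ioi (0:ℝ))),
        ENNReal.ofReal (max (x / Real.sqrt t - 1) 0) = 0 := by
      filter_upwards [ae_restrict_mem measurableSet_Ioi] with t ht
      have hs : 0 < Real.sqrt t := Real.sqrt_pos.mpr ht
      have : x / Real.sqrt t ≤ 0 := div_nonpos_of_nonpos_of_nonneg hx hs.le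
      rw [max_eq_right (by linarith), ENNReal.ofReal_zero]
    rw [lintegral_congr_ae h0, lintegral_zero, max_eq_right hx]
    norm_num
  · have hx2 : (0:ℝ) ≤ x^2 := sq_nonneg x
    rw [← Ioc_union_Ioi_eq_Ioi hx2, lintegral_union measurableSet_Ioi Ioc_disjoint_Ioi_same]
    have hB : ∫⁻ t in Ioi (x^2), ENNReal.ofReal (max (x / Real.sqrt t - 1) 0) = 0 := by
      have h0 : ∀ᵐ t ∂(volume.restrict (Ioi (x^2))),
          ENNReal.ofReal (max (x / Real.sqrt t - 1) 0) = 0 := by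
        filter_upwards [ae_restrict_mem measurableSet_Ioi] with t ht
        have h1 : x < Real.sqrt t := by
          have := Real.sqrt_lt_sqrt hx2 ht
          rwa [Real.sqrt_sq hx.le] at this
        have hs : 0 < Real.sqrt t := lt_trans hx h1
        have : x / Real.sqrt t < 1 := (div_lt_one hs).mpr h1
        rw [max_eq_right (by linarith), ENNReal.ofReal_zero]
      rw [lintegral_congr_ae h0, lintegral_zero]
    rw [hB, add_zero]
    have hae : ∀ᵐ t ∂(volume.restrict (Ioc 0 (x^2))),
        (fun t => x * t ^ (-(1/2):ℝ) - 1) t = max (x / Real.sqrt t - 1) 0 := by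
      filter_upwards [ae_restrict_mem measurableSet_Ioc] with t ht
      have ht0 : (0:ℝ) < t := ht.1
      have hs : 0 < Real.sqrt t := Real.sqrt_pos.mpr ht0
      have hle : Real.sqrt t ≤ x := by
        have := Real.sqrt_le_sqrt ht.2
        rwa [Real.sqrt_sq hx.le] at this
      have h1 : 1 ≤ x / Real.sqrt t := (one_le_div hs).mpr hle
      rw [max_eq_left (by linarith)]
      rw [Real.rpow_neg ht0.le, ← Real.sqrt_eq_rpow, div_eq_mul_inv]
    have hint : IntegrableOn (fun t : ℝ => x * t ^ (-(1/2):ℝ) - 1) (Ioc 0 (x^2)) := by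
      have := ((intervalIntegral.intervalIntegrable_rpow' (a := 0) (b := x^2) (r := -(1/2))
        (by norm_num)).const_mul x).sub (intervalIntegrable_const (c := (1:ℝ)))
      rw [intervalIntegrable_iff_integrableOn_Ioc_of_le hx2] at this
      exact this
    have hint' : IntegrableOn (fun t : ℝ => max (x / Real.sqrt t - 1) 0) (Ioc 0 (x^2)) :=
      hint.congr hae
    rw [← ofReal_integral_eq_lintegral_ofReal hint' ?nn]
    case nn =>
      exact Filter.Eventually.of_forall fun t => le_max_right _ _
    congr 1
    rw [← integral_congr_ae hae, ← intervalIntegral.integral_of_le hx2,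
      intervalIntegral.integral_sub ((intervalIntegral.intervalIntegrable_rpow' (by norm_num)).const_mul x)
        intervalIntegrable_const,
      intervalIntegral.integral_const_mul, intervalIntegral.integral_const,
      integral_rpow (Or.inl (by norm_num))]
    have h1 : ((x^2:ℝ)) ^ (-(1/2) + 1 : ℝ) = x := by
      rw [show (-(1/2) + 1 : ℝ) = 1/2 by norm_num, ← Real.sqrt_eq_rpow, Real.sqrt_sq hx.le]
    have h2 : ((0:ℝ)) ^ (-(1/2) + 1 : ℝ) = 0 := by
      rw [Real.zero_rpow (by norm_num)]
    rw [h1, h2, max_eq_left hx.le]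
    field_simp
    ring

end Aux

/-- `q t = 2 E (X/√t − 1)₊` where `X` is standard normal. -/
noncomputable def q (t : ℝ) : ℝ :=
  2 * ∫ x, max (x / Real.sqrt t - 1) 0 ∂(ProbabilityTheory.gaussianReal 0 1)

lemma q_nonneg (t : ℝ) : 0 ≤ q t :=
  mul_nonneg (by norm_num) (integral_nonneg fun x => le_max_right _ _)

open ProbabilityTheory in
lemma ofReal_q {t : ℝ} (ht : 0 < t) :
    ENNReal.ofReal (q t)
      = 2 * ∫⁻ x, ENNReal.ofReal (max (x / Real.sqrt t - 1) 0) ∂(gaussianReal 0 1) := by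
  rw [q, ENNReal.ofReal_mul (by norm_num),
    ofReal_integral_eq_lintegral_ofReal (gauss_int_max ht)
      (Filter.Eventually.of_forall fun x => le_max_right _ _)]
  norm_num

/-- `q` is a probability density on `(0,∞)`. -/
theorem stmt_10 :
    (∀ t : ℝ, 0 < t → 0 ≤ q t) ∧ (∫ t in Ioi (0:ℝ), q t) = 1 := by
  open ProbabilityTheory in
  refine ⟨fun t _ => q_nonneg t, ?_⟩
  have hm : Measurable fun p : ℝ × ℝ => max (p.2 / Real.sqrt p.1 - 1) 0 :=
    ((measurable_snd.div (Real.continuous_sqrt.measurable.comp measurable_fst)).sub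
      measurable_const).max measurable_const
  have hq_meas : AEStronglyMeasurable q (volume.restrict (Ioi 0)) := by
    have h1 : StronglyMeasurable fun t => ∫ x, max (x / Real.sqrt t - 1) 0 ∂(gaussianReal 0 1) :=
      hm.stronglyMeasurable.integral_prod_right'
    exact ((h1.const_mul 2).aestronglyMeasurable).restrict
  rw [integral_eq_lintegral_of_nonneg_ae (Filter.Eventually.of_forall fun t => q_nonneg t) hq_meas]
  have key : ∫⁻ t in Ioi (0:ℝ), ENNReal.ofReal (q t) = 1 := by
    have step1 : ∫⁻ t in Ioi (0:ℝ), ENNReal.ofReal (q t)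
        = ∫⁻ t in Ioi (0:ℝ),
            2 * ∫⁻ x, ENNReal.ofReal (max (x / Real.sqrt t - 1) 0) ∂(gaussianReal 0 1) :=
      setLIntegral_congr_fun measurableSet_Ioi (fun t ht => ofReal_q ht)
    have hm2 : Measurable fun p : ℝ × ℝ => ENNReal.ofReal (max (p.2 / Real.sqrt p.1 - 1) 0) :=
      ENNReal.measurable_ofReal.comp hm
    have hmeas2 : Measurable fun t : ℝ =>
        ∫⁻ x, ENNReal.ofReal (max (x / Real.sqrt t - 1) 0) ∂(gaussianReal 0 1) :=
      hm2.lintegral_prod_right'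
    rw [step1, lintegral_const_mul 2 hmeas2]
    rw [lintegral_lintegral_swap
      (f := fun t x => ENNReal.ofReal (max (x / Real.sqrt t - 1) 0)) hm2.aemeasurable]
    rw [lintegral_congr fun x => inner_t x]
    rw [← ofReal_integral_eq_lintegral_ofReal gauss_int_sq
      (Filter.Eventually.of_forall fun x => sq_nonneg _), gauss_half_sq]
    rw [show ((1:ℝ)/2) = 2⁻¹ by norm_num, ENNReal.ofReal_inv_of_pos (by norm_num)]
    rw [ENNReal.ofReal_ofNat]
    exact ENNReal.mul_inv_cancel (by norm_num) (by norm_num)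
  rw [key, ENNReal.toReal_one]
end

section
/- Suppose a nonnegative random process τ(a), a > 0, is non-decreasing in a, and for each fixed a, τ(a)/a² has density q(t) = 2E(X/√t − 1)₊ with X standard normal. Then for every δ ∈ (0, 1/2), almost surely for all sufficiently large T: τ(T^{1/2+δ}) > T > τ(T^{1/2−δ}). -/
/-!
Since `τ(a)/a²` has density `q`, small-ball and tail estimates for `q` control `τ`. The bound
`(y - 1)₊ ≤ |y|ᵏ` and finiteness of Gaussian moments give `q t ≤ c t^{-1/2}` and
`q t ≤ c t^{-2}`, hence `P(τ(T^{1/2+δ}) ≤ 2T) ≤ c T^{-δ}` and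
`P(τ((2T)^{1/2-δ}) ≥ T) ≤ c T^{-2δ}`. Along `T = 2ⁿ` these are summable, so by Borel–Cantelli
almost surely neither event happens for large `n`, and monotonicity of `τ` transfers this to
every `T ∈ [2ⁿ, 2ⁿ⁺¹)`.
-/

open MeasureTheory Set Filter

open Real ProbabilityTheory

lemma max_sub_one_zero_le_abs_pow (y : ℝ) {n : ℕ} (hn : n ≠ 0) :
    max (y - 1) 0 ≤ |y| ^ n := by
  refine max_le ?_ (by positivity)
  rcases le_or_gt |y| 1 with hy | hy
  · linarith [le_abs_self y, pow_nonneg (abs_nonneg y) n]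
  · linarith [le_abs_self y, le_self_pow₀ hy.le hn]

lemma integrable_abs_pow_gaussianReal (m : ℝ) (v : NNReal) (n : ℕ) :
    Integrable (fun x : ℝ => |x| ^ n) (gaussianReal m v) := by
  simpa using (memLp_id_gaussianReal (μ := m) (v := v) n).integrable_norm_pow'

lemma q_le_moment_div {t : ℝ} (ht : 0 < t) {n : ℕ} (hn : n ≠ 0) :
    q t ≤ 2 * (∫ x, |x| ^ n ∂gaussianReal 0 1) / √t ^ n := by
  have hbound : ∀ x : ℝ, max (x / √t - 1) 0 ≤ |x| ^ n / √t ^ n := fun x => by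
    simpa [abs_div, abs_of_pos (sqrt_pos.2 ht), div_pow] using
      max_sub_one_zero_le_abs_pow (x / √t) hn
  rw [mul_div_assoc, ← integral_div]
  exact mul_le_mul_of_nonneg_left (integral_mono_of_nonneg
    (ae_of_all _ fun x => le_max_right _ _)
    ((integrable_abs_pow_gaussianReal 0 1 n).div_const _) (ae_of_all _ hbound)) zero_le_two

/-- The law of `τ(a)/a²`. -/
noncomputable def qLaw : Measure ℝ :=
  volume.withDensity fun t => ENNReal.ofReal (if 0 < t then q t else 0)

lemma qLaw_apply {S : Set ℝ} (hS : MeasurableSet S) :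
    qLaw S = ∫⁻ t in Ioi 0 ∩ S, ENNReal.ofReal (q t) := by
  rw [qLaw, withDensity_apply _ hS, ← setLIntegral_indicator measurableSet_Ioi]
  congr with t
  by_cases ht : 0 < t <;> simp [ht]

lemma setLIntegral_ofReal_le {f g : ℝ → ℝ} {S : Set ℝ} (hS : MeasurableSet S)
    (hg : IntegrableOn g S) (hg0 : ∀ t ∈ S, 0 ≤ g t) (hfg : ∀ t ∈ S, f t ≤ g t) :
    ∫⁻ t in S, ENNReal.ofReal (f t) ≤ ENNReal.ofReal (∫ t in S, g t) := by
  rw [ofReal_integral_eq_lintegral_ofReal hg ((ae_restrict_iff' hS).2 (ae_of_all _ hg0))]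
  exact setLIntegral_mono' hS fun t ht => ENNReal.ofReal_le_ofReal (hfg t ht)

lemma qLaw_Iic_le {ε : ℝ} (hε : 0 ≤ ε) :
    qLaw (Iic ε) ≤ ENNReal.ofReal (4 * (∫ x, |x| ∂gaussianReal 0 1) * √ε) := by
  set M := ∫ x, |x| ∂gaussianReal 0 1
  have hM : 0 ≤ M := integral_nonneg fun x => abs_nonneg x
  rw [qLaw_apply measurableSet_Iic, Ioi_inter_Iic]
  refine (setLIntegral_ofReal_le (g := fun t => 2 * M * t ^ (-(1 / 2 : ℝ))) measurableSet_Ioc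
    (((intervalIntegrable_iff_integrableOn_Ioc_of_le hε).1
      (intervalIntegral.intervalIntegrable_rpow' (by norm_num))).const_mul _)
    (fun t ht => by have := rpow_nonneg ht.1.le (-(1 / 2 : ℝ)); positivity)
    (fun t ht => ?_)).trans_eq ?_
  · calc q t ≤ 2 * M / √t := by simpa using q_le_moment_div ht.1 one_ne_zero
      _ = 2 * M * t ^ (-(1 / 2 : ℝ)) := by
        rw [rpow_neg ht.1.le, div_eq_mul_inv, sqrt_eq_rpow]
  · rw [← intervalIntegral.integral_of_le hε, intervalIntegral.integral_const_mul,
      integral_rpow (Or.inl (by norm_num)), zero_rpow (by norm_num), sqrt_eq_rpow]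
    norm_num
    ring_nf

lemma qLaw_Ici_le {s : ℝ} (hs : 0 < s) :
    qLaw (Ici s) ≤ ENNReal.ofReal (2 * (∫ x, |x| ^ 4 ∂gaussianReal 0 1) / s) := by
  set M := ∫ x, |x| ^ 4 ∂gaussianReal 0 1
  have hM : 0 ≤ M := integral_nonneg fun x => by positivity
  rw [qLaw_apply measurableSet_Ici, inter_eq_right.2 (Ici_subset_Ioi.2 hs)]
  refine (setLIntegral_ofReal_le (g := fun t => 2 * M * t ^ (-2 : ℝ)) measurableSet_Ici
    (((integrableOn_Ici_iff_integrableOn_Ioi (by finiteness)).2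
      (integrableOn_Ioi_rpow_of_lt (by norm_num) hs)).const_mul _)
    (fun t ht => by have := rpow_nonneg (hs.trans_le ht).le (-2 : ℝ); positivity)
    (fun t ht => ?_)).trans_eq ?_
  · have ht0 : 0 < t := hs.trans_le ht
    calc q t ≤ 2 * M / √t ^ 4 := q_le_moment_div ht0 (by norm_num)
      _ = 2 * M * t ^ (-2 : ℝ) := by
        rw [show 4 = 2 * 2 from rfl, pow_mul, sq_sqrt ht0.le, rpow_neg ht0.le, rpow_two,
          div_eq_mul_inv]
  · rw [integral_Ici_eq_integral_Ioi, integral_const_mul,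
      integral_Ioi_rpow_of_lt (by norm_num) hs]
    norm_num
    rw [rpow_neg_one]
    ring_nf

section

variable {Ω : Type*} [MeasurableSpace Ω] {μ : Measure Ω} {ν : Measure ℝ} {X : Ω → ℝ} {a : ℝ}

lemma measure_le_le_of_map_div_sq {C : ℝ}
    (hν : ∀ ε, 0 ≤ ε → ν (Iic ε) ≤ ENNReal.ofReal (C * √ε))
    (hX : Measurable X) (ha : 0 < a) (hlaw : μ.map (fun ω => X ω / a ^ 2) = ν) {x : ℝ}
    (hx : 0 ≤ x) : μ {ω | X ω ≤ x} ≤ ENNReal.ofReal (C * √x / a) := by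
  have hset : {ω | X ω ≤ x} = (fun ω => X ω / a ^ 2) ⁻¹' Iic (x / a ^ 2) := by
    ext ω; simp [div_le_div_iff_of_pos_right (pow_pos ha 2)]
  rw [hset, ← Measure.map_apply (hX.div_const _) measurableSet_Iic, hlaw]
  refine (hν _ (by positivity)).trans_eq ?_
  rw [sqrt_div' _ (sq_nonneg a), sqrt_sq ha.le, mul_div_assoc]

lemma measure_ge_le_of_map_div_sq {C : ℝ}
    (hν : ∀ s, 0 < s → ν (Ici s) ≤ ENNReal.ofReal (C / s))
    (hX : Measurable X) (ha : 0 < a) (hlaw : μ.map (fun ω => X ω / a ^ 2) = ν) {y : ℝ}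
    (hy : 0 < y) : μ {ω | y ≤ X ω} ≤ ENNReal.ofReal (C * a ^ 2 / y) := by
  have hset : {ω | y ≤ X ω} = (fun ω => X ω / a ^ 2) ⁻¹' Ici (y / a ^ 2) := by
    ext ω; simp [div_le_div_iff_of_pos_right (pow_pos ha 2)]
  rw [hset, ← Measure.map_apply (hX.div_const _) measurableSet_Ici, hlaw]
  refine (hν _ (by positivity)).trans_eq ?_
  rw [div_div_eq_mul_div]

lemma ae_eventually_notMem_of_le_two_pow_rpow {s : ℕ → Set Ω} {C ε : ℝ} (hε : 0 < ε)
    (h : ∀ n, μ (s n) ≤ ENNReal.ofReal (C * ((2 : ℝ) ^ n) ^ (-ε))) :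
    ∀ᵐ ω ∂μ, ∀ᶠ n in atTop, ω ∉ s n := by
  refine ae_eventually_notMem (ne_top_of_le_ne_top ?_ (ENNReal.tsum_le_tsum h))
  refine Summable.tsum_ofReal_ne_top (Summable.mul_left C ?_)
  simp_rw [← rpow_pow_comm zero_le_two]
  exact summable_geometric_of_lt_one (by positivity)
    (rpow_lt_one_of_one_lt_of_neg one_lt_two (neg_neg_of_pos hε))

end

lemma two_pow_floor_logb_le {T : ℝ} (hT : 1 ≤ T) : (2 : ℝ) ^ ⌊logb 2 T⌋₊ ≤ T := by
  calc (2 : ℝ) ^ ⌊logb 2 T⌋₊ = 2 ^ (⌊logb 2 T⌋₊ : ℝ) := (rpow_natCast 2 _).symm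
    _ ≤ 2 ^ logb 2 T := rpow_le_rpow_of_exponent_le one_le_two
      (Nat.floor_le (logb_nonneg one_lt_two hT))
    _ = T := rpow_logb two_pos (by norm_num) (by linarith)

lemma lt_two_mul_two_pow_floor_logb {T : ℝ} (hT : 0 < T) : T < 2 * 2 ^ ⌊logb 2 T⌋₊ := by
  calc T = 2 ^ logb 2 T := (rpow_logb two_pos (by norm_num) hT).symm
    _ < 2 ^ (⌊logb 2 T⌋₊ + 1 : ℝ) :=
      rpow_lt_rpow_of_exponent_lt one_lt_two (Nat.lt_floor_add_one _)
    _ = 2 * 2 ^ ⌊logb 2 T⌋₊ := by rw [rpow_add_one two_ne_zero, rpow_natCast, mul_comm]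

lemma sqrt_two_mul_div_rpow {T : ℝ} (hT : 0 < T) (δ : ℝ) :
    √(2 * T) / T ^ (1 / 2 + δ) = √2 * T ^ (-δ) := by
  rw [sqrt_mul zero_le_two, sqrt_eq_rpow T, rpow_add hT, rpow_neg hT.le]
  field_simp

lemma rpow_sq_div_self {T : ℝ} (hT : 0 < T) (δ : ℝ) :
    ((2 * T) ^ (1 / 2 - δ)) ^ 2 / T = 2 ^ (1 - 2 * δ) * T ^ (-(2 * δ)) := by
  rw [← rpow_natCast, ← rpow_mul (by positivity), mul_rpow zero_le_two hT.le, mul_div_assoc,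
    ← rpow_sub_one hT.ne']
  ring_nf

theorem stmt_19_general {Ω : Type*} [MeasurableSpace Ω] (μ : Measure Ω)
    (τ : ℝ → Ω → ℝ)
    (hmeas : ∀ a : ℝ, 0 < a → Measurable (τ a))
    (hmono : ∀ ω, ∀ a b : ℝ, 0 < a → a ≤ b → τ a ω ≤ τ b ω)
    (hlaw : ∀ a : ℝ, 0 < a →
      Measure.map (fun ω => τ a ω / a ^ 2) μ =
        volume.withDensity (fun t => ENNReal.ofReal (if 0 < t then q t else 0))) :
    ∀ δ : ℝ, 0 < δ → δ < 1 / 2 →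
      ∀ᵐ ω ∂μ, ∀ᶠ T : ℝ in atTop,
        τ (T ^ ((1:ℝ)/2 + δ)) ω > T ∧ T > τ (T ^ ((1:ℝ)/2 - δ)) ω := by
  intro δ hδ hδ'
  obtain ⟨C₁, hC₁⟩ : ∃ C, ∀ ε, 0 ≤ ε → qLaw (Iic ε) ≤ ENNReal.ofReal (C * √ε) :=
    ⟨_, fun _ => qLaw_Iic_le⟩
  obtain ⟨C₂, hC₂⟩ : ∃ C, ∀ s, 0 < s → qLaw (Ici s) ≤ ENNReal.ofReal (C / s) :=
    ⟨_, fun _ => qLaw_Ici_le⟩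
  have hA : ∀ᵐ ω ∂μ, ∀ᶠ n : ℕ in atTop,
      ω ∉ {ω | τ (((2 : ℝ) ^ n) ^ (1 / 2 + δ)) ω ≤ 2 * 2 ^ n} := by
    refine ae_eventually_notMem_of_le_two_pow_rpow (C := C₁ * √2) hδ fun n => ?_
    refine (measure_le_le_of_map_div_sq hC₁ (hmeas _ (by positivity))
      (by positivity) (hlaw _ (by positivity)) (by positivity)).trans_eq ?_
    rw [mul_div_assoc, sqrt_two_mul_div_rpow (by positivity), mul_assoc]
  have hB : ∀ᵐ ω ∂μ, ∀ᶠ n : ℕ in atTop,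
      ω ∉ {ω | (2 : ℝ) ^ n ≤ τ ((2 * 2 ^ n) ^ (1 / 2 - δ)) ω} := by
    refine ae_eventually_notMem_of_le_two_pow_rpow (C := C₂ * 2 ^ (1 - 2 * δ))
      (by positivity : 0 < 2 * δ) fun n => ?_
    refine (measure_ge_le_of_map_div_sq hC₂ (hmeas _ (by positivity))
      (by positivity) (hlaw _ (by positivity)) (by positivity)).trans_eq ?_
    rw [mul_div_assoc, rpow_sq_div_self (by positivity), mul_assoc]
  filter_upwards [hA, hB] with ω hωA hωB
  have hfloor := tendsto_nat_floor_atTop.comp (tendsto_logb_atTop one_lt_two)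
  filter_upwards [hfloor.eventually (hωA.and hωB), eventually_ge_atTop 1] with T hω hT
  simp only [Function.comp_apply, not_le] at hω
  set n := ⌊logb 2 T⌋₊
  have hlow : (2 : ℝ) ^ n ≤ T := two_pow_floor_logb_le hT
  have hup : T < 2 * 2 ^ n := lt_two_mul_two_pow_floor_logb (by linarith)
  constructor
  · calc T < 2 * 2 ^ n := hup
      _ < τ (((2 : ℝ) ^ n) ^ (1 / 2 + δ)) ω := hω.1
      _ ≤ τ (T ^ ((1 : ℝ) / 2 + δ)) ω :=
        hmono ω _ _ (by positivity) (rpow_le_rpow (by positivity) hlow (by linarith))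
  · calc τ (T ^ ((1 : ℝ) / 2 - δ)) ω ≤ τ ((2 * 2 ^ n) ^ (1 / 2 - δ)) ω :=
          hmono ω _ _ (by positivity) (rpow_le_rpow (by positivity) hup.le (by linarith))
      _ < 2 ^ n := hω.2
      _ ≤ T := hlow

/-- if `τ(a)`, `a > 0`, is a nonnegative process, non-decreasing in
`a`, such that for each fixed `a > 0` the variable `τ(a)/a²` has density `q`, then
for every `δ ∈ (0,1/2)`, almost surely, for all sufficiently large `T`,
`τ(T^{1/2+δ}) > T > τ(T^{1/2−δ})`. -/
theorem stmt_19 {Ω : Type*} [MeasurableSpace Ω] (μ : Measure Ω) [IsProbabilityMeasure μ]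
    (τ : ℝ → Ω → ℝ)
    (hmeas : ∀ a : ℝ, 0 < a → Measurable (τ a))
    (hnonneg : ∀ a : ℝ, 0 < a → ∀ ω, 0 ≤ τ a ω)
    (hmono : ∀ ω, ∀ a b : ℝ, 0 < a → a ≤ b → τ a ω ≤ τ b ω)
    (hlaw : ∀ a : ℝ, 0 < a →
      Measure.map (fun ω => τ a ω / a ^ 2) μ =
        volume.withDensity (fun t => ENNReal.ofReal (if 0 < t then q t else 0))) :
    ∀ δ : ℝ, 0 < δ → δ < 1 / 2 →
      ∀ᵐ ω ∂μ, ∀ᶠ T : ℝ in atTop,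
        τ (T ^ ((1:ℝ)/2 + δ)) ω > T ∧ T > τ (T ^ ((1:ℝ)/2 - δ)) ω :=
  stmt_19_general μ τ hmeas hmono hlaw
end
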